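/- Let Δ be a triangulation of M_T (T a triangulation of a convex m-gon) and σ, τ ∈ Δ with |σ ∩ τ| = 3. Then σ ∩ τ is an upper facet of exactly one of σ, τ (with respect to T) and a lower facet of the other. -/
import Mathlib


namespace CyclicTri

variable {m : ℕ}

/-- Position of `v` relative to base point `a` in the cyclic order on `ZMod m`. -/
def pos (a v : ZMod m) : ℕ := (v - a).val

/-- `a ≺ b ≺ c` in the cyclic order. -/
def Cyc3 (a b c : ZMod m) : Prop := 0 < pos a b ∧ pos a b < pos a c

/-- `a ≺ b ≺ c ≺ d` in the cyclic order. -/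
def Cyc4 (a b c d : ZMod m) : Prop :=
  0 < pos a b ∧ pos a b < pos a c ∧ pos a c < pos a d

/-- The arcs `xy` and `x'y'` cross: their endpoints interleave cyclically. -/
def Cross (x y x' y' : ZMod m) : Prop := Cyc4 x x' y y' ∨ Cyc4 x' x y' y

/-- `xy` is a diagonal of the polygon: the endpoints are distinct and non-adjacent. -/
def Diag (x y : ZMod m) : Prop := x ≠ y ∧ y ≠ x + 1 ∧ x ≠ y + 1

/-- `A` is (the symmetrised set of arcs of) a triangulation of the convex `m`-gon:
a maximal set of pairwise non-crossing diagonals. -/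
def IsTriangulation (A : Set (ZMod m × ZMod m)) : Prop :=
  (∀ x y, (x, y) ∈ A → (y, x) ∈ A) ∧
  (∀ x y, (x, y) ∈ A → Diag x y) ∧
  (∀ x y x' y', (x, y) ∈ A → (x', y') ∈ A → ¬ Cross x y x' y') ∧
  (∀ x y, Diag x y → (∀ x' y', (x', y') ∈ A → ¬ Cross x y x' y') → (x, y) ∈ A)

/-- There is an arc `xy` of `A` with `a ≺ b ≼ x ≺ c ≺ d ≼ y` (the `+1` case of `χ_T`). -/
def PosCase (A : Set (ZMod m × ZMod m)) (a b c d : ZMod m) : Prop :=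
  ∃ x y, (x, y) ∈ A ∧ 0 < pos a b ∧ pos a b ≤ pos a x ∧ pos a x < pos a c ∧
    pos a c < pos a d ∧ pos a d ≤ pos a y

/-- There is an arc `xy` of `A` with `a ≼ x ≺ b ≺ c ≼ y ≺ d` (the `-1` case of `χ_T`). -/
def NegCase (A : Set (ZMod m × ZMod m)) (a b c d : ZMod m) : Prop :=
  ∃ x y, (x, y) ∈ A ∧ pos a x < pos a b ∧ pos a b < pos a c ∧ pos a c ≤ pos a y ∧
    pos a y < pos a d

open Classical in
/-- The chirotope `χ_T` on cyclically ordered tuples `a ≺ b ≺ c ≺ d`. -/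
noncomputable def chiCyc (A : Set (ZMod m × ZMod m)) (a b c d : ZMod m) : ℤ :=
  if PosCase A a b c d then 1 else if NegCase A a b c d then -1 else 0

end CyclicTri
namespace CyclicTri
variable {m : ℕ}

/-- `a ≺ b ≺ c ≺ d ≺ e` in the cyclic order, for a 5-tuple. -/
def Cyc5 (v : Fin 5 → ZMod m) : Prop :=
  0 < pos (v 0) (v 1) ∧ pos (v 0) (v 1) < pos (v 0) (v 2) ∧
    pos (v 0) (v 2) < pos (v 0) (v 3) ∧ pos (v 0) (v 3) < pos (v 0) (v 4)

/-- The signs of the signed circuit supported on the `5`-subset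
`{v 0, …, v 4}` of the uniform rank-4 oriented matroid with chirotope `chiCyc A`:
the sign of `v i` is `(-1)^i` times the chirotope of the complementary `4`-tuple. -/
noncomputable def circSign (A : Set (ZMod m × ZMod m)) (v : Fin 5 → ZMod m) :
    Fin 5 → ℤ := fun i =>
  if i = 0 then chiCyc A (v 1) (v 2) (v 3) (v 4)
  else if i = 1 then - chiCyc A (v 0) (v 2) (v 3) (v 4)
  else if i = 2 then chiCyc A (v 0) (v 1) (v 3) (v 4)
  else if i = 3 then - chiCyc A (v 0) (v 1) (v 2) (v 4)
  else chiCyc A (v 0) (v 1) (v 2) (v 3)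

end CyclicTri
namespace CyclicTri
variable {m : ℕ}

open Classical in
/-- The alternating extension `χ_T(x, a, b, c)` for `a ≺ b ≺ c` and `x ∉ {a,b,c}`. -/
noncomputable def chiX (A : Set (ZMod m × ZMod m)) (x a b c : ZMod m) : ℤ :=
  if Cyc4 x a b c then chiCyc A x a b c
  else if Cyc4 a x b c then - chiCyc A a x b c
  else chiCyc A a b x c

/-- `xy` is an arc of `B` or a boundary edge of the polygon. -/
def EdgeOf (B : Set (ZMod m × ZMod m)) (x y : ZMod m) : Prop :=
  (x, y) ∈ B ∨ y = x + 1 ∨ x = y + 1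

/-- `abc` is a triangle of the triangulation `A`: all sides are arcs or boundary edges. -/
def IsTriangleOf (A : Set (ZMod m × ZMod m)) (a b c : ZMod m) : Prop :=
  Cyc3 a b c ∧ EdgeOf A a b ∧ EdgeOf A b c ∧ EdgeOf A c a

/-- `{a,b,c}` is a facet of the oriented matroid `M_T`: the complementary cocircuit
has all of its elements of the same sign. -/
def IsFacet (A : Set (ZMod m × ZMod m)) (a b c : ZMod m) : Prop :=
  Cyc3 a b c ∧
    ((∀ x : ZMod m, x ≠ a → x ≠ b → x ≠ c → chiX A x a b c = 1) ∨
     (∀ x : ZMod m, x ≠ a → x ≠ b → x ≠ c → chiX A x a b c = -1))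

end CyclicTri
namespace CyclicTri
variable {m : ℕ}

/-- `F` is an upper facet of the basis (3-simplex) `σ` with respect to `T`. -/
def IsUpperFacetOf (A : Set (ZMod m × ZMod m)) (F σ : Finset (ZMod m)) : Prop :=
  ∃ a b c d : ZMod m, Cyc4 a b c d ∧ σ = {a, b, c, d} ∧
    ((chiCyc A a b c d = 1 ∧ (F = {a, b, d} ∨ F = {b, c, d})) ∨
     (chiCyc A a b c d = -1 ∧ (F = {a, b, c} ∨ F = {a, c, d})))

/-- `F` is a lower facet of the basis (3-simplex) `σ` with respect to `T`. -/
def IsLowerFacetOf (A : Set (ZMod m × ZMod m)) (F σ : Finset (ZMod m)) : Prop :=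
  ∃ a b c d : ZMod m, Cyc4 a b c d ∧ σ = {a, b, c, d} ∧
    ((chiCyc A a b c d = 1 ∧ (F = {a, b, c} ∨ F = {a, c, d})) ∨
     (chiCyc A a b c d = -1 ∧ (F = {a, b, d} ∨ F = {b, c, d})))

/-- `σ` and `τ` overlap on a circuit `C = (C⁺, C⁻)`: `C⁺ ⊆ σ` and there is `a ∈ C⁺`
with `C̲ \ {a} ⊆ τ`.  Circuits of the uniform rank-4 oriented matroid are the
5-subsets, with signs `circSign` up to a global sign `ε`. -/
def Overlap (A : Set (ZMod m × ZMod m)) (σ τ : Finset (ZMod m)) : Prop :=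
  ∃ v : Fin 5 → ZMod m, Cyc5 v ∧ ∃ ε : ℤ, (ε = 1 ∨ ε = -1) ∧
    (∀ i, circSign A v i = ε → v i ∈ σ) ∧
    ∃ j, circSign A v j = ε ∧ ∀ i, i ≠ j → v i ∈ τ

/-- `Δ` is a triangulation of the oriented matroid `M_T` (with arcs `A`):
a nonempty collection of bases (4-subsets) such that each facet of a member is
either a facet of `M_T` or contained in precisely two members, and no two members
overlap on a circuit.  (Intersections being common faces is automatic for the
uniform rank-4 matroid restricted to bases.) -/
def IsMatTriangulation (A : Set (ZMod m × ZMod m)) (Δ : Finset (Finset (ZMod m))) : Prop :=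
  Δ.Nonempty ∧ (∀ σ ∈ Δ, σ.card = 4) ∧
  (∀ σ ∈ Δ, ∀ F ⊆ σ, F.card = 3 →
    (∃ a b c : ZMod m, Cyc3 a b c ∧ F = {a, b, c} ∧ IsFacet A a b c) ∨
    (Δ.filter (fun τ => F ⊆ τ)).card = 2) ∧
  (∀ σ ∈ Δ, ∀ τ ∈ Δ, ¬ Overlap A σ τ)

end CyclicTri

namespace CyclicTri

set_option linter.unusedSectionVars false

variable {m : ℕ} [NeZero m]

lemma pos_lt (a v : ZMod m) : pos a v < m := ZMod.val_lt _

lemma pos_self (a : ZMod m) : pos a a = 0 := by simp [pos]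

lemma pos_eq_zero_iff {a v : ZMod m} : pos a v = 0 ↔ v = a := by
  unfold pos
  rw [ZMod.val_eq_zero, sub_eq_zero]

lemma pos_inj {a x y : ZMod m} (h : pos a x = pos a y) : x = y := by
  have h2 : x - a = y - a := ZMod.val_injective (n := m) h
  have := congrArg (· + a) h2
  simpa using this

lemma pos_trans {a b w : ZMod m} (h : pos a b ≤ pos a w) :
    pos b w = pos a w - pos a b := by
  have : w - b = (w - a) - (b - a) := by ring
  unfold pos at *
  rw [this, ZMod.val_sub h]

lemma pos_trans' {a b w : ZMod m} (h : pos a w < pos a b) :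
    pos b w = m + pos a w - pos a b := by
  have hne : b - w ≠ 0 := by
    intro h0
    rw [sub_eq_zero] at h0
    subst h0
    exact lt_irrefl _ h
  have key : w - b = -((b - a) - (w - a)) := by ring
  unfold pos at *
  haveI : NeZero ((b - a) - (w - a)) := ⟨by rwa [show (b-a)-(w-a) = b - w by ring]⟩
  rw [key, ZMod.val_neg_of_ne_zero, ZMod.val_sub h.le]
  have h1 : (b - a).val < m := ZMod.val_lt _
  omega

lemma cyc4_of_pos_lt {a w x y z : ZMod m} (h0 : pos a w < pos a x)
    (h1 : pos a x < pos a y) (h2 : pos a y < pos a z) : Cyc4 w x y z := by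
  have e1 := pos_trans (a := a) (b := w) (w := x) (by omega)
  have e2 := pos_trans (a := a) (b := w) (w := y) (by omega)
  have e3 := pos_trans (a := a) (b := w) (w := z) (by omega)
  exact ⟨by omega, by omega, by omega⟩

lemma cyc4_rot {a b c d : ZMod m} (h : Cyc4 a b c d) : Cyc4 b c d a := by
  obtain ⟨h1, h2, h3⟩ := h
  have e1 := pos_trans (a := a) (b := b) (w := c) (by omega)
  have e2 := pos_trans (a := a) (b := b) (w := d) (by omega)
  have e3 := pos_trans' (a := a) (b := b) (w := a) (by rwa [pos_self])
  have hd := pos_lt a d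
  rw [pos_self] at e3
  exact ⟨by omega, by omega, by omega⟩

lemma dich_aux {A : Set (ZMod m × ZMod m)} (hT : IsTriangulation A) (hm : 4 ≤ m) :
    ∀ n, ∀ a b c d : ZMod m, Cyc4 a b c d →
      pos a b + (pos a d - pos a c) ≤ n → PosCase A a b c d ∨ NegCase A a b c d := by
  intro n
  induction n with
  | zero =>
    intro a b c d h hmu
    obtain ⟨h1, h2, h3⟩ := h
    omega
  | succ n IH =>
    intro a b c d h hmu
    obtain ⟨hab, hbc, hcd⟩ := h
    have hdm := pos_lt a d
    have hcm := pos_lt a c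
    have hbm := pos_lt a b
    -- a c is a diagonal
    have hdiag : Diag a c := by
      refine ⟨?_, ?_, ?_⟩
      · intro he
        rw [he, pos_self] at hbc
        omega
      · intro he
        have : pos a c = 1 := by
          rw [he]
          unfold pos
          simp only [add_sub_cancel_left]
          rw [ZMod.val_one_eq_one_mod, Nat.mod_eq_of_lt (by omega)]
        omega
      · intro he
        have h1 : pos c a = m + pos a a - pos a c := pos_trans' (by rw [pos_self]; omega)
        rw [pos_self] at h1
        have : pos c a = 1 := by
          rw [he]
          unfold pos
          simp only [add_sub_cancel_left]
          rw [ZMod.val_one_eq_one_mod, Nat.mod_eq_of_lt (by omega)]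
        omega
    by_cases hac : (a, c) ∈ A
    · exact Or.inr ⟨a, c, hac, by rw [pos_self]; omega, hbc, le_refl _, hcd⟩
    -- otherwise there is a crossing arc
    have hex : ∃ p q, (p, q) ∈ A ∧ Cross a c p q := by
      by_contra hno
      push_neg at hno
      exact hac (hT.2.2.2 a c hdiag (fun x' y' hx' hcr => hno x' y' hx' hcr))
    obtain ⟨p₀, q₀, hpq₀, hcr₀⟩ := hex
    -- normalize the crossing arc to Cyc4 a p c q
    obtain ⟨p, q, hpqA, hp0, hpc, hcq⟩ :
        ∃ p q, (p, q) ∈ A ∧ 0 < pos a p ∧ pos a p < pos a c ∧ pos a c < pos a q := by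
      rcases hcr₀ with h' | h'
      · exact ⟨p₀, q₀, hpq₀, h'.1, h'.2.1, h'.2.2⟩
      · have h'' := cyc4_rot h'
        exact ⟨q₀, p₀, hT.1 _ _ hpq₀, h''.1, h''.2.1, h''.2.2⟩
    have hqm := pos_lt a q
    rcases lt_or_ge (pos a p) (pos a b) with hpb | hbp
    · rcases lt_or_ge (pos a q) (pos a d) with hqd | hdq
      · exact Or.inr ⟨p, q, hpqA, hpb, hbc, hcq.le, hqd⟩
      · -- recurse on (p, b, c, d)
        have epb := pos_trans (a := a) (b := p) (w := b) (by omega)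
        have epc := pos_trans (a := a) (b := p) (w := c) (by omega)
        have epd := pos_trans (a := a) (b := p) (w := d) (by omega)
        have h4' : Cyc4 p b c d := ⟨by omega, by omega, by omega⟩
        rcases IH p b c d h4' (by omega) with hP | hN
        · obtain ⟨x', y', hA', _, h2, h3, h4, h5⟩ := hP
          have hx'm := pos_lt a x'
          have hy'm := pos_lt a y'
          -- x' does not wrap
          have hx'ge : pos a p ≤ pos a x' := by
            by_contra hlt
            push_neg at hlt
            have := pos_trans' (a := a) (b := p) (w := x') hlt
            omega
          have ex' := pos_trans (a := a) (b := p) (w := x') hx'ge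
          rcases lt_or_ge (pos a y') (pos a p) with hy'lt | hy'ge
          · -- crossing contradiction between (p,q) and (x',y')
            exfalso
            have ey' := pos_trans' (a := a) (b := p) (w := y') hy'lt
            have eq' := pos_trans (a := a) (b := p) (w := q) (by omega)
            have hc4 : Cyc4 p x' q y' := ⟨by omega, by omega, by omega⟩
            exact hT.2.2.1 p q x' y' hpqA hA' (Or.inl hc4)
          · have ey' := pos_trans (a := a) (b := p) (w := y') hy'ge
            exact Or.inl ⟨x', y', hA', hab, by omega, by omega, hcd, by omega⟩
        · obtain ⟨x', y', hA', h1, h2, h3, h4⟩ := hN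
          have hx'm := pos_lt a x'
          have hy'm := pos_lt a y'
          have hy'ge : pos a p ≤ pos a y' := by
            by_contra hlt
            push_neg at hlt
            have := pos_trans' (a := a) (b := p) (w := y') hlt
            omega
          have ey' := pos_trans (a := a) (b := p) (w := y') hy'ge
          have hx'b : pos a x' < pos a b := by
            rcases lt_or_ge (pos a x') (pos a p) with hlt | hge
            · omega
            · have := pos_trans (a := a) (b := p) (w := x') hge
              omega
          exact Or.inr ⟨x', y', hA', hx'b, hbc, by omega, by omega⟩
    · rcases lt_or_ge (pos a q) (pos a d) with hqd | hdq
      · -- recurse on (a, b, q, d)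
        have h4' : Cyc4 a b q d := ⟨hab, by omega, by omega⟩
        rcases IH a b q d h4' (by omega) with hP | hN
        · obtain ⟨x', y', hA', _, h2, h3, h4, h5⟩ := hP
          rcases lt_or_ge (pos a x') (pos a c) with hlt | hge
          · exact Or.inl ⟨x', y', hA', hab, h2, hlt, hcd, by omega⟩
          · exfalso
            have hc4 : Cyc4 p x' q y' :=
              cyc4_of_pos_lt (a := a) (by omega) (by omega) (by omega)
            exact hT.2.2.1 p q x' y' hpqA hA' (Or.inl hc4)
        · obtain ⟨x', y', hA', h1, h2, h3, h4⟩ := hN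
          exact Or.inr ⟨x', y', hA', h1, hbc, by omega, h4⟩
      · exact Or.inl ⟨p, q, hpqA, hab, hbp, hpc, hcd, hdq⟩

lemma dichotomy {A : Set (ZMod m × ZMod m)} (hT : IsTriangulation A) (hm : 4 ≤ m)
    {a b c d : ZMod m} (h : Cyc4 a b c d) : PosCase A a b c d ∨ NegCase A a b c d :=
  dich_aux hT hm _ a b c d h le_rfl

lemma not_pos_and_neg {A : Set (ZMod m × ZMod m)} (hT : IsTriangulation A)
    {a b c d : ZMod m} (h : Cyc4 a b c d) :
    ¬ (PosCase A a b c d ∧ NegCase A a b c d) := by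
  rintro ⟨⟨x, y, hxy, _, h2, h3, _, h5⟩, ⟨x', y', hx'y', g1, g2, g3, g4⟩⟩
  obtain ⟨hab, hbc, hcd⟩ := h
  have hc4 : Cyc4 x' x y' y :=
    cyc4_of_pos_lt (a := a) (by omega) (by omega) (by omega)
  exact hT.2.2.1 x y x' y' hxy hx'y' (Or.inr hc4)

lemma pos_rot_iff {A : Set (ZMod m × ZMod m)} (hT : IsTriangulation A)
    {a b c d : ZMod m} (h : Cyc4 a b c d) :
    PosCase A b c d a ↔ NegCase A a b c d := by
  obtain ⟨hab, hbc, hcd⟩ := h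
  have hrot := cyc4_rot (show Cyc4 a b c d from ⟨hab, hbc, hcd⟩)
  obtain ⟨r1, r2, r3⟩ := hrot
  have hdm := pos_lt a d
  have hcm := pos_lt a c
  have hbm := pos_lt a b
  have epc := pos_trans (a := a) (b := b) (w := c) (by omega)
  have epd := pos_trans (a := a) (b := b) (w := d) (by omega)
  have epa : pos b a = m - pos a b := by
    have := pos_trans' (a := a) (b := b) (w := a) (by rw [pos_self]; omega)
    rw [pos_self] at this
    omega
  constructor
  · rintro ⟨x, y, hA, _, h2, h3, _, h5⟩
    have hxm := pos_lt a x
    have hym := pos_lt a y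
    have hx : pos a c ≤ pos a x ∧ pos a x < pos a d := by
      rcases lt_or_ge (pos a x) (pos a b) with hlt | hge
      · have := pos_trans' (a := a) (b := b) (w := x) hlt
        omega
      · have := pos_trans (a := a) (b := b) (w := x) hge
        omega
    have hy : pos a y < pos a b := by
      rcases lt_or_ge (pos a y) (pos a b) with hlt | hge
      · exact hlt
      · have := pos_trans (a := a) (b := b) (w := y) hge
        omega
    exact ⟨y, x, hT.1 _ _ hA, hy, hbc, hx.1, hx.2⟩
  · rintro ⟨x, y, hA, h1, h2, h3, h4⟩
    have eby := pos_trans (a := a) (b := b) (w := y) (by omega)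
    have ebx := pos_trans' (a := a) (b := b) (w := x) (by omega)
    exact ⟨y, x, hT.1 _ _ hA, r1, by omega, by omega, r3, by omega⟩

lemma neg_rot_iff {A : Set (ZMod m × ZMod m)} (hT : IsTriangulation A)
    {a b c d : ZMod m} (h : Cyc4 a b c d) :
    NegCase A b c d a ↔ PosCase A a b c d := by
  obtain ⟨hab, hbc, hcd⟩ := h
  have hrot := cyc4_rot (show Cyc4 a b c d from ⟨hab, hbc, hcd⟩)
  obtain ⟨r1, r2, r3⟩ := hrot
  have hdm := pos_lt a d
  have hcm := pos_lt a c
  have hbm := pos_lt a b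
  have epc := pos_trans (a := a) (b := b) (w := c) (by omega)
  have epd := pos_trans (a := a) (b := b) (w := d) (by omega)
  have epa : pos b a = m - pos a b := by
    have := pos_trans' (a := a) (b := b) (w := a) (by rw [pos_self]; omega)
    rw [pos_self] at this
    omega
  constructor
  · rintro ⟨x, y, hA, h1, _, h3, h4⟩
    have hxm := pos_lt a x
    have hym := pos_lt a y
    have hx : pos a b ≤ pos a x ∧ pos a x < pos a c := by
      rcases lt_or_ge (pos a x) (pos a b) with hlt | hge
      · have := pos_trans' (a := a) (b := b) (w := x) hlt
        omega
      · have := pos_trans (a := a) (b := b) (w := x) hge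
        omega
    have hy : pos a d ≤ pos a y := by
      rcases lt_or_ge (pos a y) (pos a b) with hlt | hge
      · have := pos_trans' (a := a) (b := b) (w := y) hlt
        omega
      · have := pos_trans (a := a) (b := b) (w := y) hge
        omega
    exact ⟨x, y, hA, hab, hx.1, hx.2, hcd, hy⟩
  · rintro ⟨x, y, hA, _, h2, h3, _, h5⟩
    have hym := pos_lt a y
    have ebx := pos_trans (a := a) (b := b) (w := x) (by omega)
    have eby := pos_trans (a := a) (b := b) (w := y) (by omega)
    exact ⟨x, y, hA, by omega, r2, by omega, by omega⟩

lemma chi_eq_one {A : Set (ZMod m × ZMod m)} {a b c d : ZMod m}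
    (hP : PosCase A a b c d) : chiCyc A a b c d = 1 := if_pos hP

lemma chi_eq_neg_one {A : Set (ZMod m × ZMod m)} (hT : IsTriangulation A)
    {a b c d : ZMod m} (h : Cyc4 a b c d) (hN : NegCase A a b c d) :
    chiCyc A a b c d = -1 := by
  have hnp : ¬ PosCase A a b c d := fun hP => not_pos_and_neg hT h ⟨hP, hN⟩
  unfold chiCyc
  rw [if_neg hnp, if_pos hN]

lemma chi_cases {A : Set (ZMod m × ZMod m)} (hT : IsTriangulation A) (hm : 4 ≤ m)
    {a b c d : ZMod m} (h : Cyc4 a b c d) :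
    chiCyc A a b c d = 1 ∨ chiCyc A a b c d = -1 := by
  rcases dichotomy hT hm h with hP | hN
  · exact Or.inl (chi_eq_one hP)
  · exact Or.inr (chi_eq_neg_one hT h hN)

lemma chi_rot {A : Set (ZMod m × ZMod m)} (hT : IsTriangulation A) (hm : 4 ≤ m)
    {a b c d : ZMod m} (h : Cyc4 a b c d) :
    chiCyc A b c d a = - chiCyc A a b c d := by
  have hrot := cyc4_rot h
  rcases dichotomy hT hm h with hP | hN
  · rw [chi_eq_one hP, chi_eq_neg_one hT hrot ((neg_rot_iff hT h).mpr hP)]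
  · rw [chi_eq_neg_one hT h hN, chi_eq_one ((pos_rot_iff hT h).mpr hN)]
    norm_num

lemma quad_sorted {e x y z x' y' z' : ZMod m}
    (h1 : 0 < pos e x) (h2 : pos e x < pos e y) (h3 : pos e y < pos e z)
    (hx' : x' = e ∨ x' = x ∨ x' = y ∨ x' = z)
    (hy' : y' = e ∨ y' = x ∨ y' = y ∨ y' = z)
    (hz' : z' = e ∨ z' = x ∨ z' = y ∨ z' = z)
    (g1 : 0 < pos e x') (g2 : pos e x' < pos e y') (g3 : pos e y' < pos e z') :
    x' = x ∧ y' = y ∧ z' = z := by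
  have he : pos e e = 0 := pos_self e
  rcases hx' with rfl | rfl | rfl | rfl <;> rcases hy' with rfl | rfl | rfl | rfl <;>
    rcases hz' with rfl | rfl | rfl | rfl <;> first | exact ⟨rfl, rfl, rfl⟩ | omega

set_option maxHeartbeats 1000000 in
lemma rep_rot {a b c d a' b' c' d' : ZMod m} (h : Cyc4 a b c d) (h' : Cyc4 a' b' c' d')
    (hs : ({a, b, c, d} : Finset (ZMod m)) = {a', b', c', d'}) :
    (a' = a ∧ b' = b ∧ c' = c ∧ d' = d) ∨ (a' = b ∧ b' = c ∧ c' = d ∧ d' = a) ∨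
    (a' = c ∧ b' = d ∧ c' = a ∧ d' = b) ∨ (a' = d ∧ b' = a ∧ c' = b ∧ d' = c) := by
  have hma : a' ∈ ({a, b, c, d} : Finset (ZMod m)) := by rw [hs]; simp
  have hmb : b' ∈ ({a, b, c, d} : Finset (ZMod m)) := by rw [hs]; simp
  have hmc : c' ∈ ({a, b, c, d} : Finset (ZMod m)) := by rw [hs]; simp
  have hmd : d' ∈ ({a, b, c, d} : Finset (ZMod m)) := by rw [hs]; simp
  simp only [Finset.mem_insert, Finset.mem_singleton] at hma hmb hmc hmd
  obtain ⟨g1, g2, g3⟩ := h'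
  have h2 := cyc4_rot h
  have h3 := cyc4_rot h2
  have h4 := cyc4_rot h3
  rcases hma with rfl | rfl | rfl | rfl
  · exact Or.inl ⟨rfl, quad_sorted h.1 h.2.1 h.2.2 (by tauto) (by tauto) (by tauto) g1 g2 g3⟩
  · exact Or.inr (Or.inl ⟨rfl,
      quad_sorted h2.1 h2.2.1 h2.2.2 (by tauto) (by tauto) (by tauto) g1 g2 g3⟩)
  · exact Or.inr (Or.inr (Or.inl ⟨rfl,
      quad_sorted h3.1 h3.2.1 h3.2.2 (by tauto) (by tauto) (by tauto) g1 g2 g3⟩))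
  · exact Or.inr (Or.inr (Or.inr ⟨rfl,
      quad_sorted h4.1 h4.2.1 h4.2.2 (by tauto) (by tauto) (by tauto) g1 g2 g3⟩))

/-- The "upper facet condition" for a fixed representation. -/
def UC (A : Set (ZMod m × ZMod m)) (F : Finset (ZMod m)) (a b c d : ZMod m) : Prop :=
  (chiCyc A a b c d = 1 ∧ (F = {a, b, d} ∨ F = {b, c, d})) ∨
  (chiCyc A a b c d = -1 ∧ (F = {a, b, c} ∨ F = {a, c, d}))

/-- The "lower facet condition" for a fixed representation. -/
def LC (A : Set (ZMod m × ZMod m)) (F : Finset (ZMod m)) (a b c d : ZMod m) : Prop :=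
  (chiCyc A a b c d = 1 ∧ (F = {a, b, c} ∨ F = {a, c, d})) ∨
  (chiCyc A a b c d = -1 ∧ (F = {a, b, d} ∨ F = {b, c, d}))

lemma uc_rot {A : Set (ZMod m × ZMod m)} (hT : IsTriangulation A) (hm : 4 ≤ m)
    {F : Finset (ZMod m)} {a b c d : ZMod m} (h : Cyc4 a b c d) :
    UC A F b c d a ↔ UC A F a b c d := by
  have e1 : ({b, d, a} : Finset (ZMod m)) = {a, b, d} := by ext t; simp; tauto
  have e2 : ({b, c, a} : Finset (ZMod m)) = {a, b, c} := by ext t; simp; tauto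
  have e3 : ({c, d, a} : Finset (ZMod m)) = {a, c, d} := by ext t; simp; tauto
  unfold UC
  rw [chi_rot hT hm h, e1, e2, e3]
  rcases chi_cases hT hm h with hc | hc <;> rw [hc] <;> norm_num <;> tauto

lemma lc_rot {A : Set (ZMod m × ZMod m)} (hT : IsTriangulation A) (hm : 4 ≤ m)
    {F : Finset (ZMod m)} {a b c d : ZMod m} (h : Cyc4 a b c d) :
    LC A F b c d a ↔ LC A F a b c d := by
  have e1 : ({b, d, a} : Finset (ZMod m)) = {a, b, d} := by ext t; simp; tauto
  have e2 : ({b, c, a} : Finset (ZMod m)) = {a, b, c} := by ext t; simp; tauto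
  have e3 : ({c, d, a} : Finset (ZMod m)) = {a, c, d} := by ext t; simp; tauto
  unfold LC
  rw [chi_rot hT hm h, e1, e2, e3]
  rcases chi_cases hT hm h with hc | hc <;> rw [hc] <;> norm_num <;> tauto

lemma upper_to_uc {A : Set (ZMod m × ZMod m)} (hT : IsTriangulation A) (hm : 4 ≤ m)
    {F σ : Finset (ZMod m)} {a b c d : ZMod m} (h : Cyc4 a b c d)
    (hσ : σ = {a, b, c, d}) (hu : IsUpperFacetOf A F σ) : UC A F a b c d := by
  obtain ⟨a', b', c', d', h', hσ', hcond⟩ := hu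
  have hs : ({a, b, c, d} : Finset (ZMod m)) = {a', b', c', d'} := by rw [← hσ, hσ']
  have hcond' : UC A F a' b' c' d' := hcond
  have h2 := cyc4_rot h
  have h3 := cyc4_rot h2
  rcases rep_rot h h' hs with ⟨e1, e2, e3, e4⟩ | ⟨e1, e2, e3, e4⟩ |
      ⟨e1, e2, e3, e4⟩ | ⟨e1, e2, e3, e4⟩ <;> subst e1 <;> subst e2 <;> subst e3 <;> subst e4
  · exact hcond'
  · exact (uc_rot hT hm h).mp hcond'
  · exact (uc_rot hT hm h).mp ((uc_rot hT hm h2).mp hcond')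
  · exact (uc_rot hT hm h).mp ((uc_rot hT hm h2).mp ((uc_rot hT hm h3).mp hcond'))

lemma lower_to_lc {A : Set (ZMod m × ZMod m)} (hT : IsTriangulation A) (hm : 4 ≤ m)
    {F σ : Finset (ZMod m)} {a b c d : ZMod m} (h : Cyc4 a b c d)
    (hσ : σ = {a, b, c, d}) (hl : IsLowerFacetOf A F σ) : LC A F a b c d := by
  obtain ⟨a', b', c', d', h', hσ', hcond⟩ := hl
  have hs : ({a, b, c, d} : Finset (ZMod m)) = {a', b', c', d'} := by rw [← hσ, hσ']
  have hcond' : LC A F a' b' c' d' := hcond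
  have h2 := cyc4_rot h
  have h3 := cyc4_rot h2
  rcases rep_rot h h' hs with ⟨e1, e2, e3, e4⟩ | ⟨e1, e2, e3, e4⟩ |
      ⟨e1, e2, e3, e4⟩ | ⟨e1, e2, e3, e4⟩ <;> subst e1 <;> subst e2 <;> subst e3 <;> subst e4
  · exact hcond'
  · exact (lc_rot hT hm h).mp hcond'
  · exact (lc_rot hT hm h).mp ((lc_rot hT hm h2).mp hcond')
  · exact (lc_rot hT hm h).mp ((lc_rot hT hm h2).mp ((lc_rot hT hm h3).mp hcond'))

lemma cyc4_distinct {a b c d : ZMod m} (h : Cyc4 a b c d) :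
    a ≠ b ∧ a ≠ c ∧ a ≠ d ∧ b ≠ c ∧ b ≠ d ∧ c ≠ d := by
  obtain ⟨h1, h2, h3⟩ := h
  have ha := pos_self a
  refine ⟨?_, ?_, ?_, ?_, ?_, ?_⟩ <;> intro he <;>
    first
    | (rw [he] at ha; omega)
    | (rw [he] at h1 h2 h3; omega)
    | (exact absurd (congrArg (pos a) he) (by omega))

lemma uc_lc_absurd {A : Set (ZMod m × ZMod m)} {F : Finset (ZMod m)}
    {a b c d : ZMod m} (h : Cyc4 a b c d)
    (hu : UC A F a b c d) (hl : LC A F a b c d) : False := by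
  obtain ⟨hab, hac, had, hbc, hbd, hcd⟩ := cyc4_distinct h
  have k1 : ({a, b, d} : Finset (ZMod m)) ≠ {a, b, c} := fun he => by
    have : d ∈ ({a, b, c} : Finset (ZMod m)) := he ▸ (by simp)
    simp at this; tauto
  have k2 : ({a, b, d} : Finset (ZMod m)) ≠ {a, c, d} := fun he => by
    have : b ∈ ({a, c, d} : Finset (ZMod m)) := he ▸ (by simp)
    simp at this; tauto
  have k3 : ({b, c, d} : Finset (ZMod m)) ≠ {a, b, c} := fun he => by
    have : d ∈ ({a, b, c} : Finset (ZMod m)) := he ▸ (by simp)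
    simp at this; tauto
  have k4 : ({b, c, d} : Finset (ZMod m)) ≠ {a, c, d} := fun he => by
    have : b ∈ ({a, c, d} : Finset (ZMod m)) := he ▸ (by simp)
    simp at this; tauto
  rcases hu with ⟨hc1, hF1⟩ | ⟨hc1, hF1⟩ <;> rcases hl with ⟨hc2, hF2⟩ | ⟨hc2, hF2⟩ <;>
    [skip; (rw [hc1] at hc2; norm_num at hc2); (rw [hc1] at hc2; norm_num at hc2); skip] <;>
    rcases hF1 with rfl | rfl <;> rcases hF2 with h' | h' <;> first | exact absurd h' (by assumption) | exact absurd h'.symm (by assumption)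

lemma not_upper_and_lower {A : Set (ZMod m × ZMod m)} (hT : IsTriangulation A) (hm : 4 ≤ m)
    {F σ : Finset (ZMod m)} {a b c d : ZMod m} (h : Cyc4 a b c d) (hσ : σ = {a, b, c, d})
    (hu : IsUpperFacetOf A F σ) (hl : IsLowerFacetOf A F σ) : False :=
  uc_lc_absurd h (upper_to_uc hT hm h hσ hu) (lower_to_lc hT hm h hσ hl)

lemma cast_val_eq (a : ZMod m) : ((a.val : ℕ) : ZMod m) = a :=
  (ZMod.natCast_val a).trans (ZMod.cast_id _ _)

lemma exists_sorted {U : Finset (ZMod m)} (hU : U.card = 5) :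
    ∃ v : Fin 5 → ZMod m, Cyc5 v ∧ (∀ i, v i ∈ U) ∧ (∀ u ∈ U, ∃ i, v i = u) ∧
      Function.Injective v := by
  obtain ⟨u₀, hu₀⟩ := Finset.card_pos.mp (show 0 < U.card by omega)
  classical
  set s : Finset ℕ := U.image (fun u => pos u₀ u) with hsdef
  have hs : s.card = 5 := by
    rw [hsdef, Finset.card_image_of_injOn (fun x _ y _ h => pos_inj h), hU]
  set e := s.orderIsoOfFin hs with hedef
  set v : Fin 5 → ZMod m := fun i => u₀ + (((e i : s) : ℕ) : ZMod m) with hvdef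
  have hv : ∀ i, v i ∈ U ∧ pos u₀ (v i) = ((e i : s) : ℕ) := by
    intro i
    obtain ⟨u, huU, hue⟩ := Finset.mem_image.mp (e i).2
    have hvi : v i = u := by
      rw [hvdef]
      simp only
      rw [← hue]
      show u₀ + ((pos u₀ u : ℕ) : ZMod m) = u
      unfold pos
      rw [cast_val_eq]
      ring
    rw [hvi, hue]
    exact ⟨huU, rfl⟩
  have h0s : (0 : ℕ) ∈ s := by
    rw [hsdef]
    exact Finset.mem_image.mpr ⟨u₀, hu₀, pos_self u₀⟩
  have he0 : ((e 0 : s) : ℕ) = 0 := by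
    obtain ⟨i0, hi0⟩ := e.surjective ⟨0, h0s⟩
    have h1 : e 0 ≤ e i0 := e.monotone (Fin.zero_le i0)
    rw [hi0] at h1
    exact Nat.le_antisymm h1 (Nat.zero_le _)
  have hmono : ∀ i j : Fin 5, i < j → ((e i : s) : ℕ) < ((e j : s) : ℕ) :=
    fun i j hij => e.strictMono hij
  have hpos : ∀ i, pos (v 0) (v i) = ((e i : s) : ℕ) := by
    intro i
    have hv0 : v 0 = u₀ := by
      rw [hvdef]
      simp only [he0]
      simp
    rw [hv0]
    exact (hv i).2
  refine ⟨v, ?_, fun i => (hv i).1, ?_, ?_⟩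
  · refine ⟨?_, ?_, ?_, ?_⟩ <;> simp only [hpos]
    · rw [← he0]
      exact hmono 0 1 (by decide)
    · exact hmono 1 2 (by decide)
    · exact hmono 2 3 (by decide)
    · exact hmono 3 4 (by decide)
  · intro u huU
    have hmem : pos u₀ u ∈ s := Finset.mem_image.mpr ⟨u, huU, rfl⟩
    obtain ⟨i, hi⟩ := e.surjective ⟨pos u₀ u, hmem⟩
    refine ⟨i, pos_inj (a := u₀) ?_⟩
    rw [(hv i).2, hi]
  · intro i j hij
    have := congrArg (pos u₀) hij
    rw [(hv i).2, (hv j).2] at this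
    exact e.injective (Subtype.ext this)

lemma eq_four {α : Type*} [DecidableEq α] {σ : Finset α} {w x y z : α} (hc : σ.card = 4)
    (h1 : w ∈ σ) (h2 : x ∈ σ) (h3 : y ∈ σ) (h4 : z ∈ σ)
    (n1 : w ≠ x) (n2 : w ≠ y) (n3 : w ≠ z) (n4 : x ≠ y) (n5 : x ≠ z) (n6 : y ≠ z) :
    σ = {w, x, y, z} := by
  have hsub : ({w, x, y, z} : Finset α) ⊆ σ := by
    intro t ht
    simp only [Finset.mem_insert, Finset.mem_singleton] at ht
    rcases ht with rfl | rfl | rfl | rfl <;> assumption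
  have hcard : ({w, x, y, z} : Finset α).card = 4 := by
    rw [Finset.card_insert_of_notMem (by simp [n1, n2, n3]),
        Finset.card_insert_of_notMem (by simp [n4, n5]),
        Finset.card_insert_of_notMem (by simp [n6]), Finset.card_singleton]
  exact (Finset.eq_of_subset_of_card_le hsub (by omega)).symm

lemma eq_three {α : Type*} [DecidableEq α] {σ : Finset α} {w x y : α} (hc : σ.card = 3)
    (h1 : w ∈ σ) (h2 : x ∈ σ) (h3 : y ∈ σ)
    (n1 : w ≠ x) (n2 : w ≠ y) (n3 : x ≠ y) :
    σ = {w, x, y} := by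
  have hsub : ({w, x, y} : Finset α) ⊆ σ := by
    intro t ht
    simp only [Finset.mem_insert, Finset.mem_singleton] at ht
    rcases ht with rfl | rfl | rfl <;> assumption
  have hcard : ({w, x, y} : Finset α).card = 3 := by
    rw [Finset.card_insert_of_notMem (by simp [n1, n2]),
        Finset.card_insert_of_notMem (by simp [n3]), Finset.card_singleton]
  exact (Finset.eq_of_subset_of_card_le hsub (by omega)).symm

end CyclicTri

set_option maxHeartbeats 4000000 in
open CyclicTri in
/-- If `Δ` is a triangulation of `M_T` and `σ, τ ∈ Δ` with `|σ ∩ τ| = 3`, then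
`σ ∩ τ` is an upper facet of exactly one of `σ, τ` (with respect to `T`) and a lower
facet of the other. -/
theorem stmt_15 (m : ℕ) (hm : 4 ≤ m) (A : Set (ZMod m × ZMod m))
    (hT : IsTriangulation A) (Δ : Finset (Finset (ZMod m)))
    (hΔ : IsMatTriangulation A Δ) (σ τ : Finset (ZMod m))
    (hσ : σ ∈ Δ) (hτ : τ ∈ Δ) (h3 : (σ ∩ τ).card = 3) :
    Xor' (IsUpperFacetOf A (σ ∩ τ) σ ∧ IsLowerFacetOf A (σ ∩ τ) τ)
      (IsLowerFacetOf A (σ ∩ τ) σ ∧ IsUpperFacetOf A (σ ∩ τ) τ) := by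
  haveI : NeZero m := ⟨by omega⟩
  have hσ4 : σ.card = 4 := hΔ.2.1 σ hσ
  have hτ4 : τ.card = 4 := hΔ.2.1 τ hτ
  have hU5 : (σ ∪ τ).card = 5 := by
    have := Finset.card_union_add_card_inter σ τ
    omega
  obtain ⟨v, hC5, hvU, hsurj, hinj⟩ := exists_sorted hU5
  have hne : ∀ i j : Fin 5, i ≠ j → v i ≠ v j := fun i j hij he => hij (hinj he)
  obtain ⟨ip, hipσ, hvσ'⟩ : ∃ i, v i ∉ σ ∧ ∀ k, k ≠ i → v k ∈ σ := by
    obtain ⟨u, huU, huσ⟩ : ∃ u ∈ σ ∪ τ, u ∉ σ := by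
      by_contra hcon
      push_neg at hcon
      have hsub : σ ∪ τ ⊆ σ := hcon
      have := Finset.card_le_card hsub
      omega
    obtain ⟨i, hi⟩ := hsurj u huU
    refine ⟨i, by rwa [hi], ?_⟩
    intro k hk
    by_contra hkσ
    have hcard1 : ((σ ∪ τ) \ σ).card = 1 := by
      rw [Finset.card_sdiff_of_subset Finset.subset_union_left]
      omega
    have hk1 : v k ∈ (σ ∪ τ) \ σ := Finset.mem_sdiff.mpr ⟨hvU k, hkσ⟩
    have hk2 : v i ∈ (σ ∪ τ) \ σ := Finset.mem_sdiff.mpr ⟨hvU i, by rwa [hi]⟩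
    have := Finset.card_le_one.mp (by omega) _ hk1 _ hk2
    exact hk (hinj this)
  obtain ⟨iq, hiqτ, hvτ'⟩ : ∃ i, v i ∉ τ ∧ ∀ k, k ≠ i → v k ∈ τ := by
    obtain ⟨u, huU, huτ⟩ : ∃ u ∈ σ ∪ τ, u ∉ τ := by
      by_contra hcon
      push_neg at hcon
      have hsub : σ ∪ τ ⊆ τ := hcon
      have := Finset.card_le_card hsub
      omega
    obtain ⟨i, hi⟩ := hsurj u huU
    refine ⟨i, by rwa [hi], ?_⟩
    intro k hk
    by_contra hkτ
    have hcard1 : ((σ ∪ τ) \ τ).card = 1 := by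
      rw [Finset.card_sdiff_of_subset Finset.subset_union_right]
      omega
    have hk1 : v k ∈ (σ ∪ τ) \ τ := Finset.mem_sdiff.mpr ⟨hvU k, hkτ⟩
    have hk2 : v i ∈ (σ ∪ τ) \ τ := Finset.mem_sdiff.mpr ⟨hvU i, by rwa [hi]⟩
    have := Finset.card_le_one.mp (by omega) _ hk1 _ hk2
    exact hk (hinj this)
  have hipq : ip ≠ iq := by
    intro h
    rcases Finset.mem_union.mp (hvU ip) with hh | hh
    · exact hipσ hh
    · rw [h] at hh
      exact hiqτ hh
  obtain ⟨c1, c2, c3, c4⟩ := hC5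
  have hQ0 : Cyc4 (v 1) (v 2) (v 3) (v 4) := cyc4_of_pos_lt c2 c3 c4
  have hQ1 : Cyc4 (v 0) (v 2) (v 3) (v 4) := ⟨by omega, by omega, by omega⟩
  have hQ2 : Cyc4 (v 0) (v 1) (v 3) (v 4) := ⟨by omega, by omega, by omega⟩
  have hQ3 : Cyc4 (v 0) (v 1) (v 2) (v 4) := ⟨by omega, by omega, by omega⟩
  have hQ4 : Cyc4 (v 0) (v 1) (v 2) (v 3) := ⟨by omega, by omega, by omega⟩
  have sig0 : circSign A v 0 = chiCyc A (v 1) (v 2) (v 3) (v 4) := by simp [circSign]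
  have sig1 : circSign A v 1 = - chiCyc A (v 0) (v 2) (v 3) (v 4) := by simp [circSign]
  have sig2 : circSign A v 2 = chiCyc A (v 0) (v 1) (v 3) (v 4) := by simp [circSign]
  have sig3 : circSign A v 3 = - chiCyc A (v 0) (v 1) (v 2) (v 4) := by simp [circSign]
  have sig4 : circSign A v 4 = chiCyc A (v 0) (v 1) (v 2) (v 3) := by simp [circSign]
  have hcases : ∀ i : Fin 5, i = 0 ∨ i = 1 ∨ i = 2 ∨ i = 3 ∨ i = 4 := by decide
  have hsgn : ∀ j : Fin 5, circSign A v j = 1 ∨ circSign A v j = -1 := by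
    intro j
    rcases hcases j with rfl | rfl | rfl | rfl | rfl
    · rw [sig0]
      exact chi_cases hT hm hQ0
    · rw [sig1]
      rcases chi_cases hT hm hQ1 with h | h <;> rw [h] <;> norm_num
    · rw [sig2]
      exact chi_cases hT hm hQ2
    · rw [sig3]
      rcases chi_cases hT hm hQ3 with h | h <;> rw [h] <;> norm_num
    · rw [sig4]
      exact chi_cases hT hm hQ4
  have hsp0 : circSign A v ip = circSign A v iq := by
    by_contra hner
    refine hΔ.2.2.2 σ hσ τ hτ ⟨v, ⟨c1, c2, c3, c4⟩, circSign A v iq, hsgn iq, ?_,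
      iq, rfl, fun i hi => hvτ' i hi⟩
    intro i hi
    by_cases hiip : i = ip
    · subst hiip
      exact absurd hi hner
    · exact hvσ' i hiip
  obtain ⟨ε, hε, hsq, hsp⟩ :
      ∃ e : ℤ, (e = 1 ∨ e = -1) ∧ circSign A v iq = e ∧ circSign A v ip = e :=
    ⟨circSign A v iq, hsgn iq, rfl, hsp0⟩
  clear hsp0 hsgn
  rcases hcases ip with rfl | rfl | rfl | rfl | rfl <;>
    rcases hcases iq with rfl | rfl | rfl | rfl | rfl
  · exact absurd rfl hipq
  · -- ip = 0, iq = 1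
    have hσeq : σ = {v 1, v 2, v 3, v 4} :=
      eq_four hσ4 (hvσ' 1 (by decide)) (hvσ' 2 (by decide)) (hvσ' 3 (by decide)) (hvσ' 4 (by decide)) (hne 1 2 (by decide)) (hne 1 3 (by decide)) (hne 1 4 (by decide)) (hne 2 3 (by decide)) (hne 2 4 (by decide)) (hne 3 4 (by decide))
    have hτeq : τ = {v 0, v 2, v 3, v 4} :=
      eq_four hτ4 (hvτ' 0 (by decide)) (hvτ' 2 (by decide)) (hvτ' 3 (by decide)) (hvτ' 4 (by decide)) (hne 0 2 (by decide)) (hne 0 3 (by decide)) (hne 0 4 (by decide)) (hne 2 3 (by decide)) (hne 2 4 (by decide)) (hne 3 4 (by decide))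
    have hFeq : σ ∩ τ = {v 2, v 3, v 4} :=
      eq_three h3 (Finset.mem_inter.mpr ⟨hvσ' 2 (by decide), hvτ' 2 (by decide)⟩) (Finset.mem_inter.mpr ⟨hvσ' 3 (by decide), hvτ' 3 (by decide)⟩) (Finset.mem_inter.mpr ⟨hvσ' 4 (by decide), hvτ' 4 (by decide)⟩) (hne 2 3 (by decide)) (hne 2 4 (by decide)) (hne 3 4 (by decide))
    rcases hε with rfl | rfl
    · have hchiσ : chiCyc A (v 1) (v 2) (v 3) (v 4) = 1 := by
        rw [sig0] at hsp; linarith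
      have hchiτ : chiCyc A (v 0) (v 2) (v 3) (v 4) = -1 := by
        rw [sig1] at hsq; linarith
      have hWσ : IsUpperFacetOf A (σ ∩ τ) σ := ⟨v 1, v 2, v 3, v 4, hQ0, hσeq, Or.inl ⟨hchiσ, Or.inr hFeq⟩⟩
      have hWτ : IsLowerFacetOf A (σ ∩ τ) τ := ⟨v 0, v 2, v 3, v 4, hQ1, hτeq, Or.inr ⟨hchiτ, Or.inr hFeq⟩⟩
      exact Or.inl ⟨⟨hWσ, hWτ⟩, fun hcon => not_upper_and_lower hT hm hQ0 hσeq hWσ hcon.1⟩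
    · have hchiσ : chiCyc A (v 1) (v 2) (v 3) (v 4) = -1 := by
        rw [sig0] at hsp; linarith
      have hchiτ : chiCyc A (v 0) (v 2) (v 3) (v 4) = 1 := by
        rw [sig1] at hsq; linarith
      have hWσ : IsLowerFacetOf A (σ ∩ τ) σ := ⟨v 1, v 2, v 3, v 4, hQ0, hσeq, Or.inr ⟨hchiσ, Or.inr hFeq⟩⟩
      have hWτ : IsUpperFacetOf A (σ ∩ τ) τ := ⟨v 0, v 2, v 3, v 4, hQ1, hτeq, Or.inl ⟨hchiτ, Or.inr hFeq⟩⟩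
      exact Or.inr ⟨⟨hWσ, hWτ⟩, fun hcon => not_upper_and_lower hT hm hQ0 hσeq hcon.1 hWσ⟩
  · -- ip = 0, iq = 2
    have hσeq : σ = {v 1, v 2, v 3, v 4} :=
      eq_four hσ4 (hvσ' 1 (by decide)) (hvσ' 2 (by decide)) (hvσ' 3 (by decide)) (hvσ' 4 (by decide)) (hne 1 2 (by decide)) (hne 1 3 (by decide)) (hne 1 4 (by decide)) (hne 2 3 (by decide)) (hne 2 4 (by decide)) (hne 3 4 (by decide))
    have hτeq : τ = {v 0, v 1, v 3, v 4} :=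
      eq_four hτ4 (hvτ' 0 (by decide)) (hvτ' 1 (by decide)) (hvτ' 3 (by decide)) (hvτ' 4 (by decide)) (hne 0 1 (by decide)) (hne 0 3 (by decide)) (hne 0 4 (by decide)) (hne 1 3 (by decide)) (hne 1 4 (by decide)) (hne 3 4 (by decide))
    have hFeq : σ ∩ τ = {v 1, v 3, v 4} :=
      eq_three h3 (Finset.mem_inter.mpr ⟨hvσ' 1 (by decide), hvτ' 1 (by decide)⟩) (Finset.mem_inter.mpr ⟨hvσ' 3 (by decide), hvτ' 3 (by decide)⟩) (Finset.mem_inter.mpr ⟨hvσ' 4 (by decide), hvτ' 4 (by decide)⟩) (hne 1 3 (by decide)) (hne 1 4 (by decide)) (hne 3 4 (by decide))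
    rcases hε with rfl | rfl
    · have hchiσ : chiCyc A (v 1) (v 2) (v 3) (v 4) = 1 := by
        rw [sig0] at hsp; linarith
      have hchiτ : chiCyc A (v 0) (v 1) (v 3) (v 4) = 1 := by
        rw [sig2] at hsq; linarith
      have hWσ : IsLowerFacetOf A (σ ∩ τ) σ := ⟨v 1, v 2, v 3, v 4, hQ0, hσeq, Or.inl ⟨hchiσ, Or.inr hFeq⟩⟩
      have hWτ : IsUpperFacetOf A (σ ∩ τ) τ := ⟨v 0, v 1, v 3, v 4, hQ2, hτeq, Or.inl ⟨hchiτ, Or.inr hFeq⟩⟩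
      exact Or.inr ⟨⟨hWσ, hWτ⟩, fun hcon => not_upper_and_lower hT hm hQ0 hσeq hcon.1 hWσ⟩
    · have hchiσ : chiCyc A (v 1) (v 2) (v 3) (v 4) = -1 := by
        rw [sig0] at hsp; linarith
      have hchiτ : chiCyc A (v 0) (v 1) (v 3) (v 4) = -1 := by
        rw [sig2] at hsq; linarith
      have hWσ : IsUpperFacetOf A (σ ∩ τ) σ := ⟨v 1, v 2, v 3, v 4, hQ0, hσeq, Or.inr ⟨hchiσ, Or.inr hFeq⟩⟩
      have hWτ : IsLowerFacetOf A (σ ∩ τ) τ := ⟨v 0, v 1, v 3, v 4, hQ2, hτeq, Or.inr ⟨hchiτ, Or.inr hFeq⟩⟩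
      exact Or.inl ⟨⟨hWσ, hWτ⟩, fun hcon => not_upper_and_lower hT hm hQ0 hσeq hWσ hcon.1⟩
  · -- ip = 0, iq = 3
    have hσeq : σ = {v 1, v 2, v 3, v 4} :=
      eq_four hσ4 (hvσ' 1 (by decide)) (hvσ' 2 (by decide)) (hvσ' 3 (by decide)) (hvσ' 4 (by decide)) (hne 1 2 (by decide)) (hne 1 3 (by decide)) (hne 1 4 (by decide)) (hne 2 3 (by decide)) (hne 2 4 (by decide)) (hne 3 4 (by decide))
    have hτeq : τ = {v 0, v 1, v 2, v 4} :=
      eq_four hτ4 (hvτ' 0 (by decide)) (hvτ' 1 (by decide)) (hvτ' 2 (by decide)) (hvτ' 4 (by decide)) (hne 0 1 (by decide)) (hne 0 2 (by decide)) (hne 0 4 (by decide)) (hne 1 2 (by decide)) (hne 1 4 (by decide)) (hne 2 4 (by decide))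
    have hFeq : σ ∩ τ = {v 1, v 2, v 4} :=
      eq_three h3 (Finset.mem_inter.mpr ⟨hvσ' 1 (by decide), hvτ' 1 (by decide)⟩) (Finset.mem_inter.mpr ⟨hvσ' 2 (by decide), hvτ' 2 (by decide)⟩) (Finset.mem_inter.mpr ⟨hvσ' 4 (by decide), hvτ' 4 (by decide)⟩) (hne 1 2 (by decide)) (hne 1 4 (by decide)) (hne 2 4 (by decide))
    rcases hε with rfl | rfl
    · have hchiσ : chiCyc A (v 1) (v 2) (v 3) (v 4) = 1 := by
        rw [sig0] at hsp; linarith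
      have hchiτ : chiCyc A (v 0) (v 1) (v 2) (v 4) = -1 := by
        rw [sig3] at hsq; linarith
      have hWσ : IsUpperFacetOf A (σ ∩ τ) σ := ⟨v 1, v 2, v 3, v 4, hQ0, hσeq, Or.inl ⟨hchiσ, Or.inl hFeq⟩⟩
      have hWτ : IsLowerFacetOf A (σ ∩ τ) τ := ⟨v 0, v 1, v 2, v 4, hQ3, hτeq, Or.inr ⟨hchiτ, Or.inr hFeq⟩⟩
      exact Or.inl ⟨⟨hWσ, hWτ⟩, fun hcon => not_upper_and_lower hT hm hQ0 hσeq hWσ hcon.1⟩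
    · have hchiσ : chiCyc A (v 1) (v 2) (v 3) (v 4) = -1 := by
        rw [sig0] at hsp; linarith
      have hchiτ : chiCyc A (v 0) (v 1) (v 2) (v 4) = 1 := by
        rw [sig3] at hsq; linarith
      have hWσ : IsLowerFacetOf A (σ ∩ τ) σ := ⟨v 1, v 2, v 3, v 4, hQ0, hσeq, Or.inr ⟨hchiσ, Or.inl hFeq⟩⟩
      have hWτ : IsUpperFacetOf A (σ ∩ τ) τ := ⟨v 0, v 1, v 2, v 4, hQ3, hτeq, Or.inl ⟨hchiτ, Or.inr hFeq⟩⟩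
      exact Or.inr ⟨⟨hWσ, hWτ⟩, fun hcon => not_upper_and_lower hT hm hQ0 hσeq hcon.1 hWσ⟩
  · -- ip = 0, iq = 4
    have hσeq : σ = {v 1, v 2, v 3, v 4} :=
      eq_four hσ4 (hvσ' 1 (by decide)) (hvσ' 2 (by decide)) (hvσ' 3 (by decide)) (hvσ' 4 (by decide)) (hne 1 2 (by decide)) (hne 1 3 (by decide)) (hne 1 4 (by decide)) (hne 2 3 (by decide)) (hne 2 4 (by decide)) (hne 3 4 (by decide))
    have hτeq : τ = {v 0, v 1, v 2, v 3} :=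
      eq_four hτ4 (hvτ' 0 (by decide)) (hvτ' 1 (by decide)) (hvτ' 2 (by decide)) (hvτ' 3 (by decide)) (hne 0 1 (by decide)) (hne 0 2 (by decide)) (hne 0 3 (by decide)) (hne 1 2 (by decide)) (hne 1 3 (by decide)) (hne 2 3 (by decide))
    have hFeq : σ ∩ τ = {v 1, v 2, v 3} :=
      eq_three h3 (Finset.mem_inter.mpr ⟨hvσ' 1 (by decide), hvτ' 1 (by decide)⟩) (Finset.mem_inter.mpr ⟨hvσ' 2 (by decide), hvτ' 2 (by decide)⟩) (Finset.mem_inter.mpr ⟨hvσ' 3 (by decide), hvτ' 3 (by decide)⟩) (hne 1 2 (by decide)) (hne 1 3 (by decide)) (hne 2 3 (by decide))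
    rcases hε with rfl | rfl
    · have hchiσ : chiCyc A (v 1) (v 2) (v 3) (v 4) = 1 := by
        rw [sig0] at hsp; linarith
      have hchiτ : chiCyc A (v 0) (v 1) (v 2) (v 3) = 1 := by
        rw [sig4] at hsq; linarith
      have hWσ : IsLowerFacetOf A (σ ∩ τ) σ := ⟨v 1, v 2, v 3, v 4, hQ0, hσeq, Or.inl ⟨hchiσ, Or.inl hFeq⟩⟩
      have hWτ : IsUpperFacetOf A (σ ∩ τ) τ := ⟨v 0, v 1, v 2, v 3, hQ4, hτeq, Or.inl ⟨hchiτ, Or.inr hFeq⟩⟩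
      exact Or.inr ⟨⟨hWσ, hWτ⟩, fun hcon => not_upper_and_lower hT hm hQ0 hσeq hcon.1 hWσ⟩
    · have hchiσ : chiCyc A (v 1) (v 2) (v 3) (v 4) = -1 := by
        rw [sig0] at hsp; linarith
      have hchiτ : chiCyc A (v 0) (v 1) (v 2) (v 3) = -1 := by
        rw [sig4] at hsq; linarith
      have hWσ : IsUpperFacetOf A (σ ∩ τ) σ := ⟨v 1, v 2, v 3, v 4, hQ0, hσeq, Or.inr ⟨hchiσ, Or.inl hFeq⟩⟩
      have hWτ : IsLowerFacetOf A (σ ∩ τ) τ := ⟨v 0, v 1, v 2, v 3, hQ4, hτeq, Or.inr ⟨hchiτ, Or.inr hFeq⟩⟩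
      exact Or.inl ⟨⟨hWσ, hWτ⟩, fun hcon => not_upper_and_lower hT hm hQ0 hσeq hWσ hcon.1⟩
  · -- ip = 1, iq = 0
    have hσeq : σ = {v 0, v 2, v 3, v 4} :=
      eq_four hσ4 (hvσ' 0 (by decide)) (hvσ' 2 (by decide)) (hvσ' 3 (by decide)) (hvσ' 4 (by decide)) (hne 0 2 (by decide)) (hne 0 3 (by decide)) (hne 0 4 (by decide)) (hne 2 3 (by decide)) (hne 2 4 (by decide)) (hne 3 4 (by decide))
    have hτeq : τ = {v 1, v 2, v 3, v 4} :=
      eq_four hτ4 (hvτ' 1 (by decide)) (hvτ' 2 (by decide)) (hvτ' 3 (by decide)) (hvτ' 4 (by decide)) (hne 1 2 (by decide)) (hne 1 3 (by decide)) (hne 1 4 (by decide)) (hne 2 3 (by decide)) (hne 2 4 (by decide)) (hne 3 4 (by decide))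
    have hFeq : σ ∩ τ = {v 2, v 3, v 4} :=
      eq_three h3 (Finset.mem_inter.mpr ⟨hvσ' 2 (by decide), hvτ' 2 (by decide)⟩) (Finset.mem_inter.mpr ⟨hvσ' 3 (by decide), hvτ' 3 (by decide)⟩) (Finset.mem_inter.mpr ⟨hvσ' 4 (by decide), hvτ' 4 (by decide)⟩) (hne 2 3 (by decide)) (hne 2 4 (by decide)) (hne 3 4 (by decide))
    rcases hε with rfl | rfl
    · have hchiσ : chiCyc A (v 0) (v 2) (v 3) (v 4) = -1 := by
        rw [sig1] at hsp; linarith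
      have hchiτ : chiCyc A (v 1) (v 2) (v 3) (v 4) = 1 := by
        rw [sig0] at hsq; linarith
      have hWσ : IsLowerFacetOf A (σ ∩ τ) σ := ⟨v 0, v 2, v 3, v 4, hQ1, hσeq, Or.inr ⟨hchiσ, Or.inr hFeq⟩⟩
      have hWτ : IsUpperFacetOf A (σ ∩ τ) τ := ⟨v 1, v 2, v 3, v 4, hQ0, hτeq, Or.inl ⟨hchiτ, Or.inr hFeq⟩⟩
      exact Or.inr ⟨⟨hWσ, hWτ⟩, fun hcon => not_upper_and_lower hT hm hQ1 hσeq hcon.1 hWσ⟩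
    · have hchiσ : chiCyc A (v 0) (v 2) (v 3) (v 4) = 1 := by
        rw [sig1] at hsp; linarith
      have hchiτ : chiCyc A (v 1) (v 2) (v 3) (v 4) = -1 := by
        rw [sig0] at hsq; linarith
      have hWσ : IsUpperFacetOf A (σ ∩ τ) σ := ⟨v 0, v 2, v 3, v 4, hQ1, hσeq, Or.inl ⟨hchiσ, Or.inr hFeq⟩⟩
      have hWτ : IsLowerFacetOf A (σ ∩ τ) τ := ⟨v 1, v 2, v 3, v 4, hQ0, hτeq, Or.inr ⟨hchiτ, Or.inr hFeq⟩⟩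
      exact Or.inl ⟨⟨hWσ, hWτ⟩, fun hcon => not_upper_and_lower hT hm hQ1 hσeq hWσ hcon.1⟩
  · exact absurd rfl hipq
  · -- ip = 1, iq = 2
    have hσeq : σ = {v 0, v 2, v 3, v 4} :=
      eq_four hσ4 (hvσ' 0 (by decide)) (hvσ' 2 (by decide)) (hvσ' 3 (by decide)) (hvσ' 4 (by decide)) (hne 0 2 (by decide)) (hne 0 3 (by decide)) (hne 0 4 (by decide)) (hne 2 3 (by decide)) (hne 2 4 (by decide)) (hne 3 4 (by decide))
    have hτeq : τ = {v 0, v 1, v 3, v 4} :=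
      eq_four hτ4 (hvτ' 0 (by decide)) (hvτ' 1 (by decide)) (hvτ' 3 (by decide)) (hvτ' 4 (by decide)) (hne 0 1 (by decide)) (hne 0 3 (by decide)) (hne 0 4 (by decide)) (hne 1 3 (by decide)) (hne 1 4 (by decide)) (hne 3 4 (by decide))
    have hFeq : σ ∩ τ = {v 0, v 3, v 4} :=
      eq_three h3 (Finset.mem_inter.mpr ⟨hvσ' 0 (by decide), hvτ' 0 (by decide)⟩) (Finset.mem_inter.mpr ⟨hvσ' 3 (by decide), hvτ' 3 (by decide)⟩) (Finset.mem_inter.mpr ⟨hvσ' 4 (by decide), hvτ' 4 (by decide)⟩) (hne 0 3 (by decide)) (hne 0 4 (by decide)) (hne 3 4 (by decide))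
    rcases hε with rfl | rfl
    · have hchiσ : chiCyc A (v 0) (v 2) (v 3) (v 4) = -1 := by
        rw [sig1] at hsp; linarith
      have hchiτ : chiCyc A (v 0) (v 1) (v 3) (v 4) = 1 := by
        rw [sig2] at hsq; linarith
      have hWσ : IsUpperFacetOf A (σ ∩ τ) σ := ⟨v 0, v 2, v 3, v 4, hQ1, hσeq, Or.inr ⟨hchiσ, Or.inr hFeq⟩⟩
      have hWτ : IsLowerFacetOf A (σ ∩ τ) τ := ⟨v 0, v 1, v 3, v 4, hQ2, hτeq, Or.inl ⟨hchiτ, Or.inr hFeq⟩⟩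
      exact Or.inl ⟨⟨hWσ, hWτ⟩, fun hcon => not_upper_and_lower hT hm hQ1 hσeq hWσ hcon.1⟩
    · have hchiσ : chiCyc A (v 0) (v 2) (v 3) (v 4) = 1 := by
        rw [sig1] at hsp; linarith
      have hchiτ : chiCyc A (v 0) (v 1) (v 3) (v 4) = -1 := by
        rw [sig2] at hsq; linarith
      have hWσ : IsLowerFacetOf A (σ ∩ τ) σ := ⟨v 0, v 2, v 3, v 4, hQ1, hσeq, Or.inl ⟨hchiσ, Or.inr hFeq⟩⟩
      have hWτ : IsUpperFacetOf A (σ ∩ τ) τ := ⟨v 0, v 1, v 3, v 4, hQ2, hτeq, Or.inr ⟨hchiτ, Or.inr hFeq⟩⟩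
      exact Or.inr ⟨⟨hWσ, hWτ⟩, fun hcon => not_upper_and_lower hT hm hQ1 hσeq hcon.1 hWσ⟩
  · -- ip = 1, iq = 3
    have hσeq : σ = {v 0, v 2, v 3, v 4} :=
      eq_four hσ4 (hvσ' 0 (by decide)) (hvσ' 2 (by decide)) (hvσ' 3 (by decide)) (hvσ' 4 (by decide)) (hne 0 2 (by decide)) (hne 0 3 (by decide)) (hne 0 4 (by decide)) (hne 2 3 (by decide)) (hne 2 4 (by decide)) (hne 3 4 (by decide))
    have hτeq : τ = {v 0, v 1, v 2, v 4} :=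
      eq_four hτ4 (hvτ' 0 (by decide)) (hvτ' 1 (by decide)) (hvτ' 2 (by decide)) (hvτ' 4 (by decide)) (hne 0 1 (by decide)) (hne 0 2 (by decide)) (hne 0 4 (by decide)) (hne 1 2 (by decide)) (hne 1 4 (by decide)) (hne 2 4 (by decide))
    have hFeq : σ ∩ τ = {v 0, v 2, v 4} :=
      eq_three h3 (Finset.mem_inter.mpr ⟨hvσ' 0 (by decide), hvτ' 0 (by decide)⟩) (Finset.mem_inter.mpr ⟨hvσ' 2 (by decide), hvτ' 2 (by decide)⟩) (Finset.mem_inter.mpr ⟨hvσ' 4 (by decide), hvτ' 4 (by decide)⟩) (hne 0 2 (by decide)) (hne 0 4 (by decide)) (hne 2 4 (by decide))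
    rcases hε with rfl | rfl
    · have hchiσ : chiCyc A (v 0) (v 2) (v 3) (v 4) = -1 := by
        rw [sig1] at hsp; linarith
      have hchiτ : chiCyc A (v 0) (v 1) (v 2) (v 4) = -1 := by
        rw [sig3] at hsq; linarith
      have hWσ : IsLowerFacetOf A (σ ∩ τ) σ := ⟨v 0, v 2, v 3, v 4, hQ1, hσeq, Or.inr ⟨hchiσ, Or.inl hFeq⟩⟩
      have hWτ : IsUpperFacetOf A (σ ∩ τ) τ := ⟨v 0, v 1, v 2, v 4, hQ3, hτeq, Or.inr ⟨hchiτ, Or.inr hFeq⟩⟩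
      exact Or.inr ⟨⟨hWσ, hWτ⟩, fun hcon => not_upper_and_lower hT hm hQ1 hσeq hcon.1 hWσ⟩
    · have hchiσ : chiCyc A (v 0) (v 2) (v 3) (v 4) = 1 := by
        rw [sig1] at hsp; linarith
      have hchiτ : chiCyc A (v 0) (v 1) (v 2) (v 4) = 1 := by
        rw [sig3] at hsq; linarith
      have hWσ : IsUpperFacetOf A (σ ∩ τ) σ := ⟨v 0, v 2, v 3, v 4, hQ1, hσeq, Or.inl ⟨hchiσ, Or.inl hFeq⟩⟩
      have hWτ : IsLowerFacetOf A (σ ∩ τ) τ := ⟨v 0, v 1, v 2, v 4, hQ3, hτeq, Or.inl ⟨hchiτ, Or.inr hFeq⟩⟩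
      exact Or.inl ⟨⟨hWσ, hWτ⟩, fun hcon => not_upper_and_lower hT hm hQ1 hσeq hWσ hcon.1⟩
  · -- ip = 1, iq = 4
    have hσeq : σ = {v 0, v 2, v 3, v 4} :=
      eq_four hσ4 (hvσ' 0 (by decide)) (hvσ' 2 (by decide)) (hvσ' 3 (by decide)) (hvσ' 4 (by decide)) (hne 0 2 (by decide)) (hne 0 3 (by decide)) (hne 0 4 (by decide)) (hne 2 3 (by decide)) (hne 2 4 (by decide)) (hne 3 4 (by decide))
    have hτeq : τ = {v 0, v 1, v 2, v 3} :=
      eq_four hτ4 (hvτ' 0 (by decide)) (hvτ' 1 (by decide)) (hvτ' 2 (by decide)) (hvτ' 3 (by decide)) (hne 0 1 (by decide)) (hne 0 2 (by decide)) (hne 0 3 (by decide)) (hne 1 2 (by decide)) (hne 1 3 (by decide)) (hne 2 3 (by decide))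
    have hFeq : σ ∩ τ = {v 0, v 2, v 3} :=
      eq_three h3 (Finset.mem_inter.mpr ⟨hvσ' 0 (by decide), hvτ' 0 (by decide)⟩) (Finset.mem_inter.mpr ⟨hvσ' 2 (by decide), hvτ' 2 (by decide)⟩) (Finset.mem_inter.mpr ⟨hvσ' 3 (by decide), hvτ' 3 (by decide)⟩) (hne 0 2 (by decide)) (hne 0 3 (by decide)) (hne 2 3 (by decide))
    rcases hε with rfl | rfl
    · have hchiσ : chiCyc A (v 0) (v 2) (v 3) (v 4) = -1 := by
        rw [sig1] at hsp; linarith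
      have hchiτ : chiCyc A (v 0) (v 1) (v 2) (v 3) = 1 := by
        rw [sig4] at hsq; linarith
      have hWσ : IsUpperFacetOf A (σ ∩ τ) σ := ⟨v 0, v 2, v 3, v 4, hQ1, hσeq, Or.inr ⟨hchiσ, Or.inl hFeq⟩⟩
      have hWτ : IsLowerFacetOf A (σ ∩ τ) τ := ⟨v 0, v 1, v 2, v 3, hQ4, hτeq, Or.inl ⟨hchiτ, Or.inr hFeq⟩⟩
      exact Or.inl ⟨⟨hWσ, hWτ⟩, fun hcon => not_upper_and_lower hT hm hQ1 hσeq hWσ hcon.1⟩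
    · have hchiσ : chiCyc A (v 0) (v 2) (v 3) (v 4) = 1 := by
        rw [sig1] at hsp; linarith
      have hchiτ : chiCyc A (v 0) (v 1) (v 2) (v 3) = -1 := by
        rw [sig4] at hsq; linarith
      have hWσ : IsLowerFacetOf A (σ ∩ τ) σ := ⟨v 0, v 2, v 3, v 4, hQ1, hσeq, Or.inl ⟨hchiσ, Or.inl hFeq⟩⟩
      have hWτ : IsUpperFacetOf A (σ ∩ τ) τ := ⟨v 0, v 1, v 2, v 3, hQ4, hτeq, Or.inr ⟨hchiτ, Or.inr hFeq⟩⟩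
      exact Or.inr ⟨⟨hWσ, hWτ⟩, fun hcon => not_upper_and_lower hT hm hQ1 hσeq hcon.1 hWσ⟩
  · -- ip = 2, iq = 0
    have hσeq : σ = {v 0, v 1, v 3, v 4} :=
      eq_four hσ4 (hvσ' 0 (by decide)) (hvσ' 1 (by decide)) (hvσ' 3 (by decide)) (hvσ' 4 (by decide)) (hne 0 1 (by decide)) (hne 0 3 (by decide)) (hne 0 4 (by decide)) (hne 1 3 (by decide)) (hne 1 4 (by decide)) (hne 3 4 (by decide))
    have hτeq : τ = {v 1, v 2, v 3, v 4} :=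
      eq_four hτ4 (hvτ' 1 (by decide)) (hvτ' 2 (by decide)) (hvτ' 3 (by decide)) (hvτ' 4 (by decide)) (hne 1 2 (by decide)) (hne 1 3 (by decide)) (hne 1 4 (by decide)) (hne 2 3 (by decide)) (hne 2 4 (by decide)) (hne 3 4 (by decide))
    have hFeq : σ ∩ τ = {v 1, v 3, v 4} :=
      eq_three h3 (Finset.mem_inter.mpr ⟨hvσ' 1 (by decide), hvτ' 1 (by decide)⟩) (Finset.mem_inter.mpr ⟨hvσ' 3 (by decide), hvτ' 3 (by decide)⟩) (Finset.mem_inter.mpr ⟨hvσ' 4 (by decide), hvτ' 4 (by decide)⟩) (hne 1 3 (by decide)) (hne 1 4 (by decide)) (hne 3 4 (by decide))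
    rcases hε with rfl | rfl
    · have hchiσ : chiCyc A (v 0) (v 1) (v 3) (v 4) = 1 := by
        rw [sig2] at hsp; linarith
      have hchiτ : chiCyc A (v 1) (v 2) (v 3) (v 4) = 1 := by
        rw [sig0] at hsq; linarith
      have hWσ : IsUpperFacetOf A (σ ∩ τ) σ := ⟨v 0, v 1, v 3, v 4, hQ2, hσeq, Or.inl ⟨hchiσ, Or.inr hFeq⟩⟩
      have hWτ : IsLowerFacetOf A (σ ∩ τ) τ := ⟨v 1, v 2, v 3, v 4, hQ0, hτeq, Or.inl ⟨hchiτ, Or.inr hFeq⟩⟩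
      exact Or.inl ⟨⟨hWσ, hWτ⟩, fun hcon => not_upper_and_lower hT hm hQ2 hσeq hWσ hcon.1⟩
    · have hchiσ : chiCyc A (v 0) (v 1) (v 3) (v 4) = -1 := by
        rw [sig2] at hsp; linarith
      have hchiτ : chiCyc A (v 1) (v 2) (v 3) (v 4) = -1 := by
        rw [sig0] at hsq; linarith
      have hWσ : IsLowerFacetOf A (σ ∩ τ) σ := ⟨v 0, v 1, v 3, v 4, hQ2, hσeq, Or.inr ⟨hchiσ, Or.inr hFeq⟩⟩
      have hWτ : IsUpperFacetOf A (σ ∩ τ) τ := ⟨v 1, v 2, v 3, v 4, hQ0, hτeq, Or.inr ⟨hchiτ, Or.inr hFeq⟩⟩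
      exact Or.inr ⟨⟨hWσ, hWτ⟩, fun hcon => not_upper_and_lower hT hm hQ2 hσeq hcon.1 hWσ⟩
  · -- ip = 2, iq = 1
    have hσeq : σ = {v 0, v 1, v 3, v 4} :=
      eq_four hσ4 (hvσ' 0 (by decide)) (hvσ' 1 (by decide)) (hvσ' 3 (by decide)) (hvσ' 4 (by decide)) (hne 0 1 (by decide)) (hne 0 3 (by decide)) (hne 0 4 (by decide)) (hne 1 3 (by decide)) (hne 1 4 (by decide)) (hne 3 4 (by decide))
    have hτeq : τ = {v 0, v 2, v 3, v 4} :=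
      eq_four hτ4 (hvτ' 0 (by decide)) (hvτ' 2 (by decide)) (hvτ' 3 (by decide)) (hvτ' 4 (by decide)) (hne 0 2 (by decide)) (hne 0 3 (by decide)) (hne 0 4 (by decide)) (hne 2 3 (by decide)) (hne 2 4 (by decide)) (hne 3 4 (by decide))
    have hFeq : σ ∩ τ = {v 0, v 3, v 4} :=
      eq_three h3 (Finset.mem_inter.mpr ⟨hvσ' 0 (by decide), hvτ' 0 (by decide)⟩) (Finset.mem_inter.mpr ⟨hvσ' 3 (by decide), hvτ' 3 (by decide)⟩) (Finset.mem_inter.mpr ⟨hvσ' 4 (by decide), hvτ' 4 (by decide)⟩) (hne 0 3 (by decide)) (hne 0 4 (by decide)) (hne 3 4 (by decide))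
    rcases hε with rfl | rfl
    · have hchiσ : chiCyc A (v 0) (v 1) (v 3) (v 4) = 1 := by
        rw [sig2] at hsp; linarith
      have hchiτ : chiCyc A (v 0) (v 2) (v 3) (v 4) = -1 := by
        rw [sig1] at hsq; linarith
      have hWσ : IsLowerFacetOf A (σ ∩ τ) σ := ⟨v 0, v 1, v 3, v 4, hQ2, hσeq, Or.inl ⟨hchiσ, Or.inr hFeq⟩⟩
      have hWτ : IsUpperFacetOf A (σ ∩ τ) τ := ⟨v 0, v 2, v 3, v 4, hQ1, hτeq, Or.inr ⟨hchiτ, Or.inr hFeq⟩⟩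
      exact Or.inr ⟨⟨hWσ, hWτ⟩, fun hcon => not_upper_and_lower hT hm hQ2 hσeq hcon.1 hWσ⟩
    · have hchiσ : chiCyc A (v 0) (v 1) (v 3) (v 4) = -1 := by
        rw [sig2] at hsp; linarith
      have hchiτ : chiCyc A (v 0) (v 2) (v 3) (v 4) = 1 := by
        rw [sig1] at hsq; linarith
      have hWσ : IsUpperFacetOf A (σ ∩ τ) σ := ⟨v 0, v 1, v 3, v 4, hQ2, hσeq, Or.inr ⟨hchiσ, Or.inr hFeq⟩⟩
      have hWτ : IsLowerFacetOf A (σ ∩ τ) τ := ⟨v 0, v 2, v 3, v 4, hQ1, hτeq, Or.inl ⟨hchiτ, Or.inr hFeq⟩⟩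
      exact Or.inl ⟨⟨hWσ, hWτ⟩, fun hcon => not_upper_and_lower hT hm hQ2 hσeq hWσ hcon.1⟩
  · exact absurd rfl hipq
  · -- ip = 2, iq = 3
    have hσeq : σ = {v 0, v 1, v 3, v 4} :=
      eq_four hσ4 (hvσ' 0 (by decide)) (hvσ' 1 (by decide)) (hvσ' 3 (by decide)) (hvσ' 4 (by decide)) (hne 0 1 (by decide)) (hne 0 3 (by decide)) (hne 0 4 (by decide)) (hne 1 3 (by decide)) (hne 1 4 (by decide)) (hne 3 4 (by decide))
    have hτeq : τ = {v 0, v 1, v 2, v 4} :=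
      eq_four hτ4 (hvτ' 0 (by decide)) (hvτ' 1 (by decide)) (hvτ' 2 (by decide)) (hvτ' 4 (by decide)) (hne 0 1 (by decide)) (hne 0 2 (by decide)) (hne 0 4 (by decide)) (hne 1 2 (by decide)) (hne 1 4 (by decide)) (hne 2 4 (by decide))
    have hFeq : σ ∩ τ = {v 0, v 1, v 4} :=
      eq_three h3 (Finset.mem_inter.mpr ⟨hvσ' 0 (by decide), hvτ' 0 (by decide)⟩) (Finset.mem_inter.mpr ⟨hvσ' 1 (by decide), hvτ' 1 (by decide)⟩) (Finset.mem_inter.mpr ⟨hvσ' 4 (by decide), hvτ' 4 (by decide)⟩) (hne 0 1 (by decide)) (hne 0 4 (by decide)) (hne 1 4 (by decide))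
    rcases hε with rfl | rfl
    · have hchiσ : chiCyc A (v 0) (v 1) (v 3) (v 4) = 1 := by
        rw [sig2] at hsp; linarith
      have hchiτ : chiCyc A (v 0) (v 1) (v 2) (v 4) = -1 := by
        rw [sig3] at hsq; linarith
      have hWσ : IsUpperFacetOf A (σ ∩ τ) σ := ⟨v 0, v 1, v 3, v 4, hQ2, hσeq, Or.inl ⟨hchiσ, Or.inl hFeq⟩⟩
      have hWτ : IsLowerFacetOf A (σ ∩ τ) τ := ⟨v 0, v 1, v 2, v 4, hQ3, hτeq, Or.inr ⟨hchiτ, Or.inl hFeq⟩⟩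
      exact Or.inl ⟨⟨hWσ, hWτ⟩, fun hcon => not_upper_and_lower hT hm hQ2 hσeq hWσ hcon.1⟩
    · have hchiσ : chiCyc A (v 0) (v 1) (v 3) (v 4) = -1 := by
        rw [sig2] at hsp; linarith
      have hchiτ : chiCyc A (v 0) (v 1) (v 2) (v 4) = 1 := by
        rw [sig3] at hsq; linarith
      have hWσ : IsLowerFacetOf A (σ ∩ τ) σ := ⟨v 0, v 1, v 3, v 4, hQ2, hσeq, Or.inr ⟨hchiσ, Or.inl hFeq⟩⟩
      have hWτ : IsUpperFacetOf A (σ ∩ τ) τ := ⟨v 0, v 1, v 2, v 4, hQ3, hτeq, Or.inl ⟨hchiτ, Or.inl hFeq⟩⟩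
      exact Or.inr ⟨⟨hWσ, hWτ⟩, fun hcon => not_upper_and_lower hT hm hQ2 hσeq hcon.1 hWσ⟩
  · -- ip = 2, iq = 4
    have hσeq : σ = {v 0, v 1, v 3, v 4} :=
      eq_four hσ4 (hvσ' 0 (by decide)) (hvσ' 1 (by decide)) (hvσ' 3 (by decide)) (hvσ' 4 (by decide)) (hne 0 1 (by decide)) (hne 0 3 (by decide)) (hne 0 4 (by decide)) (hne 1 3 (by decide)) (hne 1 4 (by decide)) (hne 3 4 (by decide))
    have hτeq : τ = {v 0, v 1, v 2, v 3} :=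
      eq_four hτ4 (hvτ' 0 (by decide)) (hvτ' 1 (by decide)) (hvτ' 2 (by decide)) (hvτ' 3 (by decide)) (hne 0 1 (by decide)) (hne 0 2 (by decide)) (hne 0 3 (by decide)) (hne 1 2 (by decide)) (hne 1 3 (by decide)) (hne 2 3 (by decide))
    have hFeq : σ ∩ τ = {v 0, v 1, v 3} :=
      eq_three h3 (Finset.mem_inter.mpr ⟨hvσ' 0 (by decide), hvτ' 0 (by decide)⟩) (Finset.mem_inter.mpr ⟨hvσ' 1 (by decide), hvτ' 1 (by decide)⟩) (Finset.mem_inter.mpr ⟨hvσ' 3 (by decide), hvτ' 3 (by decide)⟩) (hne 0 1 (by decide)) (hne 0 3 (by decide)) (hne 1 3 (by decide))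
    rcases hε with rfl | rfl
    · have hchiσ : chiCyc A (v 0) (v 1) (v 3) (v 4) = 1 := by
        rw [sig2] at hsp; linarith
      have hchiτ : chiCyc A (v 0) (v 1) (v 2) (v 3) = 1 := by
        rw [sig4] at hsq; linarith
      have hWσ : IsLowerFacetOf A (σ ∩ τ) σ := ⟨v 0, v 1, v 3, v 4, hQ2, hσeq, Or.inl ⟨hchiσ, Or.inl hFeq⟩⟩
      have hWτ : IsUpperFacetOf A (σ ∩ τ) τ := ⟨v 0, v 1, v 2, v 3, hQ4, hτeq, Or.inl ⟨hchiτ, Or.inl hFeq⟩⟩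
      exact Or.inr ⟨⟨hWσ, hWτ⟩, fun hcon => not_upper_and_lower hT hm hQ2 hσeq hcon.1 hWσ⟩
    · have hchiσ : chiCyc A (v 0) (v 1) (v 3) (v 4) = -1 := by
        rw [sig2] at hsp; linarith
      have hchiτ : chiCyc A (v 0) (v 1) (v 2) (v 3) = -1 := by
        rw [sig4] at hsq; linarith
      have hWσ : IsUpperFacetOf A (σ ∩ τ) σ := ⟨v 0, v 1, v 3, v 4, hQ2, hσeq, Or.inr ⟨hchiσ, Or.inl hFeq⟩⟩
      have hWτ : IsLowerFacetOf A (σ ∩ τ) τ := ⟨v 0, v 1, v 2, v 3, hQ4, hτeq, Or.inr ⟨hchiτ, Or.inl hFeq⟩⟩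
      exact Or.inl ⟨⟨hWσ, hWτ⟩, fun hcon => not_upper_and_lower hT hm hQ2 hσeq hWσ hcon.1⟩
  · -- ip = 3, iq = 0
    have hσeq : σ = {v 0, v 1, v 2, v 4} :=
      eq_four hσ4 (hvσ' 0 (by decide)) (hvσ' 1 (by decide)) (hvσ' 2 (by decide)) (hvσ' 4 (by decide)) (hne 0 1 (by decide)) (hne 0 2 (by decide)) (hne 0 4 (by decide)) (hne 1 2 (by decide)) (hne 1 4 (by decide)) (hne 2 4 (by decide))
    have hτeq : τ = {v 1, v 2, v 3, v 4} :=
      eq_four hτ4 (hvτ' 1 (by decide)) (hvτ' 2 (by decide)) (hvτ' 3 (by decide)) (hvτ' 4 (by decide)) (hne 1 2 (by decide)) (hne 1 3 (by decide)) (hne 1 4 (by decide)) (hne 2 3 (by decide)) (hne 2 4 (by decide)) (hne 3 4 (by decide))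
    have hFeq : σ ∩ τ = {v 1, v 2, v 4} :=
      eq_three h3 (Finset.mem_inter.mpr ⟨hvσ' 1 (by decide), hvτ' 1 (by decide)⟩) (Finset.mem_inter.mpr ⟨hvσ' 2 (by decide), hvτ' 2 (by decide)⟩) (Finset.mem_inter.mpr ⟨hvσ' 4 (by decide), hvτ' 4 (by decide)⟩) (hne 1 2 (by decide)) (hne 1 4 (by decide)) (hne 2 4 (by decide))
    rcases hε with rfl | rfl
    · have hchiσ : chiCyc A (v 0) (v 1) (v 2) (v 4) = -1 := by
        rw [sig3] at hsp; linarith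
      have hchiτ : chiCyc A (v 1) (v 2) (v 3) (v 4) = 1 := by
        rw [sig0] at hsq; linarith
      have hWσ : IsLowerFacetOf A (σ ∩ τ) σ := ⟨v 0, v 1, v 2, v 4, hQ3, hσeq, Or.inr ⟨hchiσ, Or.inr hFeq⟩⟩
      have hWτ : IsUpperFacetOf A (σ ∩ τ) τ := ⟨v 1, v 2, v 3, v 4, hQ0, hτeq, Or.inl ⟨hchiτ, Or.inl hFeq⟩⟩
      exact Or.inr ⟨⟨hWσ, hWτ⟩, fun hcon => not_upper_and_lower hT hm hQ3 hσeq hcon.1 hWσ⟩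
    · have hchiσ : chiCyc A (v 0) (v 1) (v 2) (v 4) = 1 := by
        rw [sig3] at hsp; linarith
      have hchiτ : chiCyc A (v 1) (v 2) (v 3) (v 4) = -1 := by
        rw [sig0] at hsq; linarith
      have hWσ : IsUpperFacetOf A (σ ∩ τ) σ := ⟨v 0, v 1, v 2, v 4, hQ3, hσeq, Or.inl ⟨hchiσ, Or.inr hFeq⟩⟩
      have hWτ : IsLowerFacetOf A (σ ∩ τ) τ := ⟨v 1, v 2, v 3, v 4, hQ0, hτeq, Or.inr ⟨hchiτ, Or.inl hFeq⟩⟩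
      exact Or.inl ⟨⟨hWσ, hWτ⟩, fun hcon => not_upper_and_lower hT hm hQ3 hσeq hWσ hcon.1⟩
  · -- ip = 3, iq = 1
    have hσeq : σ = {v 0, v 1, v 2, v 4} :=
      eq_four hσ4 (hvσ' 0 (by decide)) (hvσ' 1 (by decide)) (hvσ' 2 (by decide)) (hvσ' 4 (by decide)) (hne 0 1 (by decide)) (hne 0 2 (by decide)) (hne 0 4 (by decide)) (hne 1 2 (by decide)) (hne 1 4 (by decide)) (hne 2 4 (by decide))
    have hτeq : τ = {v 0, v 2, v 3, v 4} :=
      eq_four hτ4 (hvτ' 0 (by decide)) (hvτ' 2 (by decide)) (hvτ' 3 (by decide)) (hvτ' 4 (by decide)) (hne 0 2 (by decide)) (hne 0 3 (by decide)) (hne 0 4 (by decide)) (hne 2 3 (by decide)) (hne 2 4 (by decide)) (hne 3 4 (by decide))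
    have hFeq : σ ∩ τ = {v 0, v 2, v 4} :=
      eq_three h3 (Finset.mem_inter.mpr ⟨hvσ' 0 (by decide), hvτ' 0 (by decide)⟩) (Finset.mem_inter.mpr ⟨hvσ' 2 (by decide), hvτ' 2 (by decide)⟩) (Finset.mem_inter.mpr ⟨hvσ' 4 (by decide), hvτ' 4 (by decide)⟩) (hne 0 2 (by decide)) (hne 0 4 (by decide)) (hne 2 4 (by decide))
    rcases hε with rfl | rfl
    · have hchiσ : chiCyc A (v 0) (v 1) (v 2) (v 4) = -1 := by
        rw [sig3] at hsp; linarith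
      have hchiτ : chiCyc A (v 0) (v 2) (v 3) (v 4) = -1 := by
        rw [sig1] at hsq; linarith
      have hWσ : IsUpperFacetOf A (σ ∩ τ) σ := ⟨v 0, v 1, v 2, v 4, hQ3, hσeq, Or.inr ⟨hchiσ, Or.inr hFeq⟩⟩
      have hWτ : IsLowerFacetOf A (σ ∩ τ) τ := ⟨v 0, v 2, v 3, v 4, hQ1, hτeq, Or.inr ⟨hchiτ, Or.inl hFeq⟩⟩
      exact Or.inl ⟨⟨hWσ, hWτ⟩, fun hcon => not_upper_and_lower hT hm hQ3 hσeq hWσ hcon.1⟩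
    · have hchiσ : chiCyc A (v 0) (v 1) (v 2) (v 4) = 1 := by
        rw [sig3] at hsp; linarith
      have hchiτ : chiCyc A (v 0) (v 2) (v 3) (v 4) = 1 := by
        rw [sig1] at hsq; linarith
      have hWσ : IsLowerFacetOf A (σ ∩ τ) σ := ⟨v 0, v 1, v 2, v 4, hQ3, hσeq, Or.inl ⟨hchiσ, Or.inr hFeq⟩⟩
      have hWτ : IsUpperFacetOf A (σ ∩ τ) τ := ⟨v 0, v 2, v 3, v 4, hQ1, hτeq, Or.inl ⟨hchiτ, Or.inl hFeq⟩⟩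
      exact Or.inr ⟨⟨hWσ, hWτ⟩, fun hcon => not_upper_and_lower hT hm hQ3 hσeq hcon.1 hWσ⟩
  · -- ip = 3, iq = 2
    have hσeq : σ = {v 0, v 1, v 2, v 4} :=
      eq_four hσ4 (hvσ' 0 (by decide)) (hvσ' 1 (by decide)) (hvσ' 2 (by decide)) (hvσ' 4 (by decide)) (hne 0 1 (by decide)) (hne 0 2 (by decide)) (hne 0 4 (by decide)) (hne 1 2 (by decide)) (hne 1 4 (by decide)) (hne 2 4 (by decide))
    have hτeq : τ = {v 0, v 1, v 3, v 4} :=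
      eq_four hτ4 (hvτ' 0 (by decide)) (hvτ' 1 (by decide)) (hvτ' 3 (by decide)) (hvτ' 4 (by decide)) (hne 0 1 (by decide)) (hne 0 3 (by decide)) (hne 0 4 (by decide)) (hne 1 3 (by decide)) (hne 1 4 (by decide)) (hne 3 4 (by decide))
    have hFeq : σ ∩ τ = {v 0, v 1, v 4} :=
      eq_three h3 (Finset.mem_inter.mpr ⟨hvσ' 0 (by decide), hvτ' 0 (by decide)⟩) (Finset.mem_inter.mpr ⟨hvσ' 1 (by decide), hvτ' 1 (by decide)⟩) (Finset.mem_inter.mpr ⟨hvσ' 4 (by decide), hvτ' 4 (by decide)⟩) (hne 0 1 (by decide)) (hne 0 4 (by decide)) (hne 1 4 (by decide))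
    rcases hε with rfl | rfl
    · have hchiσ : chiCyc A (v 0) (v 1) (v 2) (v 4) = -1 := by
        rw [sig3] at hsp; linarith
      have hchiτ : chiCyc A (v 0) (v 1) (v 3) (v 4) = 1 := by
        rw [sig2] at hsq; linarith
      have hWσ : IsLowerFacetOf A (σ ∩ τ) σ := ⟨v 0, v 1, v 2, v 4, hQ3, hσeq, Or.inr ⟨hchiσ, Or.inl hFeq⟩⟩
      have hWτ : IsUpperFacetOf A (σ ∩ τ) τ := ⟨v 0, v 1, v 3, v 4, hQ2, hτeq, Or.inl ⟨hchiτ, Or.inl hFeq⟩⟩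
      exact Or.inr ⟨⟨hWσ, hWτ⟩, fun hcon => not_upper_and_lower hT hm hQ3 hσeq hcon.1 hWσ⟩
    · have hchiσ : chiCyc A (v 0) (v 1) (v 2) (v 4) = 1 := by
        rw [sig3] at hsp; linarith
      have hchiτ : chiCyc A (v 0) (v 1) (v 3) (v 4) = -1 := by
        rw [sig2] at hsq; linarith
      have hWσ : IsUpperFacetOf A (σ ∩ τ) σ := ⟨v 0, v 1, v 2, v 4, hQ3, hσeq, Or.inl ⟨hchiσ, Or.inl hFeq⟩⟩
      have hWτ : IsLowerFacetOf A (σ ∩ τ) τ := ⟨v 0, v 1, v 3, v 4, hQ2, hτeq, Or.inr ⟨hchiτ, Or.inl hFeq⟩⟩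
      exact Or.inl ⟨⟨hWσ, hWτ⟩, fun hcon => not_upper_and_lower hT hm hQ3 hσeq hWσ hcon.1⟩
  · exact absurd rfl hipq
  · -- ip = 3, iq = 4
    have hσeq : σ = {v 0, v 1, v 2, v 4} :=
      eq_four hσ4 (hvσ' 0 (by decide)) (hvσ' 1 (by decide)) (hvσ' 2 (by decide)) (hvσ' 4 (by decide)) (hne 0 1 (by decide)) (hne 0 2 (by decide)) (hne 0 4 (by decide)) (hne 1 2 (by decide)) (hne 1 4 (by decide)) (hne 2 4 (by decide))
    have hτeq : τ = {v 0, v 1, v 2, v 3} :=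
      eq_four hτ4 (hvτ' 0 (by decide)) (hvτ' 1 (by decide)) (hvτ' 2 (by decide)) (hvτ' 3 (by decide)) (hne 0 1 (by decide)) (hne 0 2 (by decide)) (hne 0 3 (by decide)) (hne 1 2 (by decide)) (hne 1 3 (by decide)) (hne 2 3 (by decide))
    have hFeq : σ ∩ τ = {v 0, v 1, v 2} :=
      eq_three h3 (Finset.mem_inter.mpr ⟨hvσ' 0 (by decide), hvτ' 0 (by decide)⟩) (Finset.mem_inter.mpr ⟨hvσ' 1 (by decide), hvτ' 1 (by decide)⟩) (Finset.mem_inter.mpr ⟨hvσ' 2 (by decide), hvτ' 2 (by decide)⟩) (hne 0 1 (by decide)) (hne 0 2 (by decide)) (hne 1 2 (by decide))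
    rcases hε with rfl | rfl
    · have hchiσ : chiCyc A (v 0) (v 1) (v 2) (v 4) = -1 := by
        rw [sig3] at hsp; linarith
      have hchiτ : chiCyc A (v 0) (v 1) (v 2) (v 3) = 1 := by
        rw [sig4] at hsq; linarith
      have hWσ : IsUpperFacetOf A (σ ∩ τ) σ := ⟨v 0, v 1, v 2, v 4, hQ3, hσeq, Or.inr ⟨hchiσ, Or.inl hFeq⟩⟩
      have hWτ : IsLowerFacetOf A (σ ∩ τ) τ := ⟨v 0, v 1, v 2, v 3, hQ4, hτeq, Or.inl ⟨hchiτ, Or.inl hFeq⟩⟩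
      exact Or.inl ⟨⟨hWσ, hWτ⟩, fun hcon => not_upper_and_lower hT hm hQ3 hσeq hWσ hcon.1⟩
    · have hchiσ : chiCyc A (v 0) (v 1) (v 2) (v 4) = 1 := by
        rw [sig3] at hsp; linarith
      have hchiτ : chiCyc A (v 0) (v 1) (v 2) (v 3) = -1 := by
        rw [sig4] at hsq; linarith
      have hWσ : IsLowerFacetOf A (σ ∩ τ) σ := ⟨v 0, v 1, v 2, v 4, hQ3, hσeq, Or.inl ⟨hchiσ, Or.inl hFeq⟩⟩
      have hWτ : IsUpperFacetOf A (σ ∩ τ) τ := ⟨v 0, v 1, v 2, v 3, hQ4, hτeq, Or.inr ⟨hchiτ, Or.inl hFeq⟩⟩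
      exact Or.inr ⟨⟨hWσ, hWτ⟩, fun hcon => not_upper_and_lower hT hm hQ3 hσeq hcon.1 hWσ⟩
  · -- ip = 4, iq = 0
    have hσeq : σ = {v 0, v 1, v 2, v 3} :=
      eq_four hσ4 (hvσ' 0 (by decide)) (hvσ' 1 (by decide)) (hvσ' 2 (by decide)) (hvσ' 3 (by decide)) (hne 0 1 (by decide)) (hne 0 2 (by decide)) (hne 0 3 (by decide)) (hne 1 2 (by decide)) (hne 1 3 (by decide)) (hne 2 3 (by decide))
    have hτeq : τ = {v 1, v 2, v 3, v 4} :=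
      eq_four hτ4 (hvτ' 1 (by decide)) (hvτ' 2 (by decide)) (hvτ' 3 (by decide)) (hvτ' 4 (by decide)) (hne 1 2 (by decide)) (hne 1 3 (by decide)) (hne 1 4 (by decide)) (hne 2 3 (by decide)) (hne 2 4 (by decide)) (hne 3 4 (by decide))
    have hFeq : σ ∩ τ = {v 1, v 2, v 3} :=
      eq_three h3 (Finset.mem_inter.mpr ⟨hvσ' 1 (by decide), hvτ' 1 (by decide)⟩) (Finset.mem_inter.mpr ⟨hvσ' 2 (by decide), hvτ' 2 (by decide)⟩) (Finset.mem_inter.mpr ⟨hvσ' 3 (by decide), hvτ' 3 (by decide)⟩) (hne 1 2 (by decide)) (hne 1 3 (by decide)) (hne 2 3 (by decide))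
    rcases hε with rfl | rfl
    · have hchiσ : chiCyc A (v 0) (v 1) (v 2) (v 3) = 1 := by
        rw [sig4] at hsp; linarith
      have hchiτ : chiCyc A (v 1) (v 2) (v 3) (v 4) = 1 := by
        rw [sig0] at hsq; linarith
      have hWσ : IsUpperFacetOf A (σ ∩ τ) σ := ⟨v 0, v 1, v 2, v 3, hQ4, hσeq, Or.inl ⟨hchiσ, Or.inr hFeq⟩⟩
      have hWτ : IsLowerFacetOf A (σ ∩ τ) τ := ⟨v 1, v 2, v 3, v 4, hQ0, hτeq, Or.inl ⟨hchiτ, Or.inl hFeq⟩⟩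
      exact Or.inl ⟨⟨hWσ, hWτ⟩, fun hcon => not_upper_and_lower hT hm hQ4 hσeq hWσ hcon.1⟩
    · have hchiσ : chiCyc A (v 0) (v 1) (v 2) (v 3) = -1 := by
        rw [sig4] at hsp; linarith
      have hchiτ : chiCyc A (v 1) (v 2) (v 3) (v 4) = -1 := by
        rw [sig0] at hsq; linarith
      have hWσ : IsLowerFacetOf A (σ ∩ τ) σ := ⟨v 0, v 1, v 2, v 3, hQ4, hσeq, Or.inr ⟨hchiσ, Or.inr hFeq⟩⟩
      have hWτ : IsUpperFacetOf A (σ ∩ τ) τ := ⟨v 1, v 2, v 3, v 4, hQ0, hτeq, Or.inr ⟨hchiτ, Or.inl hFeq⟩⟩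
      exact Or.inr ⟨⟨hWσ, hWτ⟩, fun hcon => not_upper_and_lower hT hm hQ4 hσeq hcon.1 hWσ⟩
  · -- ip = 4, iq = 1
    have hσeq : σ = {v 0, v 1, v 2, v 3} :=
      eq_four hσ4 (hvσ' 0 (by decide)) (hvσ' 1 (by decide)) (hvσ' 2 (by decide)) (hvσ' 3 (by decide)) (hne 0 1 (by decide)) (hne 0 2 (by decide)) (hne 0 3 (by decide)) (hne 1 2 (by decide)) (hne 1 3 (by decide)) (hne 2 3 (by decide))
    have hτeq : τ = {v 0, v 2, v 3, v 4} :=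
      eq_four hτ4 (hvτ' 0 (by decide)) (hvτ' 2 (by decide)) (hvτ' 3 (by decide)) (hvτ' 4 (by decide)) (hne 0 2 (by decide)) (hne 0 3 (by decide)) (hne 0 4 (by decide)) (hne 2 3 (by decide)) (hne 2 4 (by decide)) (hne 3 4 (by decide))
    have hFeq : σ ∩ τ = {v 0, v 2, v 3} :=
      eq_three h3 (Finset.mem_inter.mpr ⟨hvσ' 0 (by decide), hvτ' 0 (by decide)⟩) (Finset.mem_inter.mpr ⟨hvσ' 2 (by decide), hvτ' 2 (by decide)⟩) (Finset.mem_inter.mpr ⟨hvσ' 3 (by decide), hvτ' 3 (by decide)⟩) (hne 0 2 (by decide)) (hne 0 3 (by decide)) (hne 2 3 (by decide))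
    rcases hε with rfl | rfl
    · have hchiσ : chiCyc A (v 0) (v 1) (v 2) (v 3) = 1 := by
        rw [sig4] at hsp; linarith
      have hchiτ : chiCyc A (v 0) (v 2) (v 3) (v 4) = -1 := by
        rw [sig1] at hsq; linarith
      have hWσ : IsLowerFacetOf A (σ ∩ τ) σ := ⟨v 0, v 1, v 2, v 3, hQ4, hσeq, Or.inl ⟨hchiσ, Or.inr hFeq⟩⟩
      have hWτ : IsUpperFacetOf A (σ ∩ τ) τ := ⟨v 0, v 2, v 3, v 4, hQ1, hτeq, Or.inr ⟨hchiτ, Or.inl hFeq⟩⟩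
      exact Or.inr ⟨⟨hWσ, hWτ⟩, fun hcon => not_upper_and_lower hT hm hQ4 hσeq hcon.1 hWσ⟩
    · have hchiσ : chiCyc A (v 0) (v 1) (v 2) (v 3) = -1 := by
        rw [sig4] at hsp; linarith
      have hchiτ : chiCyc A (v 0) (v 2) (v 3) (v 4) = 1 := by
        rw [sig1] at hsq; linarith
      have hWσ : IsUpperFacetOf A (σ ∩ τ) σ := ⟨v 0, v 1, v 2, v 3, hQ4, hσeq, Or.inr ⟨hchiσ, Or.inr hFeq⟩⟩
      have hWτ : IsLowerFacetOf A (σ ∩ τ) τ := ⟨v 0, v 2, v 3, v 4, hQ1, hτeq, Or.inl ⟨hchiτ, Or.inl hFeq⟩⟩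
      exact Or.inl ⟨⟨hWσ, hWτ⟩, fun hcon => not_upper_and_lower hT hm hQ4 hσeq hWσ hcon.1⟩
  · -- ip = 4, iq = 2
    have hσeq : σ = {v 0, v 1, v 2, v 3} :=
      eq_four hσ4 (hvσ' 0 (by decide)) (hvσ' 1 (by decide)) (hvσ' 2 (by decide)) (hvσ' 3 (by decide)) (hne 0 1 (by decide)) (hne 0 2 (by decide)) (hne 0 3 (by decide)) (hne 1 2 (by decide)) (hne 1 3 (by decide)) (hne 2 3 (by decide))
    have hτeq : τ = {v 0, v 1, v 3, v 4} :=
      eq_four hτ4 (hvτ' 0 (by decide)) (hvτ' 1 (by decide)) (hvτ' 3 (by decide)) (hvτ' 4 (by decide)) (hne 0 1 (by decide)) (hne 0 3 (by decide)) (hne 0 4 (by decide)) (hne 1 3 (by decide)) (hne 1 4 (by decide)) (hne 3 4 (by decide))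
    have hFeq : σ ∩ τ = {v 0, v 1, v 3} :=
      eq_three h3 (Finset.mem_inter.mpr ⟨hvσ' 0 (by decide), hvτ' 0 (by decide)⟩) (Finset.mem_inter.mpr ⟨hvσ' 1 (by decide), hvτ' 1 (by decide)⟩) (Finset.mem_inter.mpr ⟨hvσ' 3 (by decide), hvτ' 3 (by decide)⟩) (hne 0 1 (by decide)) (hne 0 3 (by decide)) (hne 1 3 (by decide))
    rcases hε with rfl | rfl
    · have hchiσ : chiCyc A (v 0) (v 1) (v 2) (v 3) = 1 := by
        rw [sig4] at hsp; linarith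
      have hchiτ : chiCyc A (v 0) (v 1) (v 3) (v 4) = 1 := by
        rw [sig2] at hsq; linarith
      have hWσ : IsUpperFacetOf A (σ ∩ τ) σ := ⟨v 0, v 1, v 2, v 3, hQ4, hσeq, Or.inl ⟨hchiσ, Or.inl hFeq⟩⟩
      have hWτ : IsLowerFacetOf A (σ ∩ τ) τ := ⟨v 0, v 1, v 3, v 4, hQ2, hτeq, Or.inl ⟨hchiτ, Or.inl hFeq⟩⟩
      exact Or.inl ⟨⟨hWσ, hWτ⟩, fun hcon => not_upper_and_lower hT hm hQ4 hσeq hWσ hcon.1⟩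
    · have hchiσ : chiCyc A (v 0) (v 1) (v 2) (v 3) = -1 := by
        rw [sig4] at hsp; linarith
      have hchiτ : chiCyc A (v 0) (v 1) (v 3) (v 4) = -1 := by
        rw [sig2] at hsq; linarith
      have hWσ : IsLowerFacetOf A (σ ∩ τ) σ := ⟨v 0, v 1, v 2, v 3, hQ4, hσeq, Or.inr ⟨hchiσ, Or.inl hFeq⟩⟩
      have hWτ : IsUpperFacetOf A (σ ∩ τ) τ := ⟨v 0, v 1, v 3, v 4, hQ2, hτeq, Or.inr ⟨hchiτ, Or.inl hFeq⟩⟩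
      exact Or.inr ⟨⟨hWσ, hWτ⟩, fun hcon => not_upper_and_lower hT hm hQ4 hσeq hcon.1 hWσ⟩
  · -- ip = 4, iq = 3
    have hσeq : σ = {v 0, v 1, v 2, v 3} :=
      eq_four hσ4 (hvσ' 0 (by decide)) (hvσ' 1 (by decide)) (hvσ' 2 (by decide)) (hvσ' 3 (by decide)) (hne 0 1 (by decide)) (hne 0 2 (by decide)) (hne 0 3 (by decide)) (hne 1 2 (by decide)) (hne 1 3 (by decide)) (hne 2 3 (by decide))
    have hτeq : τ = {v 0, v 1, v 2, v 4} :=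
      eq_four hτ4 (hvτ' 0 (by decide)) (hvτ' 1 (by decide)) (hvτ' 2 (by decide)) (hvτ' 4 (by decide)) (hne 0 1 (by decide)) (hne 0 2 (by decide)) (hne 0 4 (by decide)) (hne 1 2 (by decide)) (hne 1 4 (by decide)) (hne 2 4 (by decide))
    have hFeq : σ ∩ τ = {v 0, v 1, v 2} :=
      eq_three h3 (Finset.mem_inter.mpr ⟨hvσ' 0 (by decide), hvτ' 0 (by decide)⟩) (Finset.mem_inter.mpr ⟨hvσ' 1 (by decide), hvτ' 1 (by decide)⟩) (Finset.mem_inter.mpr ⟨hvσ' 2 (by decide), hvτ' 2 (by decide)⟩) (hne 0 1 (by decide)) (hne 0 2 (by decide)) (hne 1 2 (by decide))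
    rcases hε with rfl | rfl
    · have hchiσ : chiCyc A (v 0) (v 1) (v 2) (v 3) = 1 := by
        rw [sig4] at hsp; linarith
      have hchiτ : chiCyc A (v 0) (v 1) (v 2) (v 4) = -1 := by
        rw [sig3] at hsq; linarith
      have hWσ : IsLowerFacetOf A (σ ∩ τ) σ := ⟨v 0, v 1, v 2, v 3, hQ4, hσeq, Or.inl ⟨hchiσ, Or.inl hFeq⟩⟩
      have hWτ : IsUpperFacetOf A (σ ∩ τ) τ := ⟨v 0, v 1, v 2, v 4, hQ3, hτeq, Or.inr ⟨hchiτ, Or.inl hFeq⟩⟩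
      exact Or.inr ⟨⟨hWσ, hWτ⟩, fun hcon => not_upper_and_lower hT hm hQ4 hσeq hcon.1 hWσ⟩
    · have hchiσ : chiCyc A (v 0) (v 1) (v 2) (v 3) = -1 := by
        rw [sig4] at hsp; linarith
      have hchiτ : chiCyc A (v 0) (v 1) (v 2) (v 4) = 1 := by
        rw [sig3] at hsq; linarith
      have hWσ : IsUpperFacetOf A (σ ∩ τ) σ := ⟨v 0, v 1, v 2, v 3, hQ4, hσeq, Or.inr ⟨hchiσ, Or.inl hFeq⟩⟩
      have hWτ : IsLowerFacetOf A (σ ∩ τ) τ := ⟨v 0, v 1, v 2, v 4, hQ3, hτeq, Or.inl ⟨hchiτ, Or.inl hFeq⟩⟩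
      exact Or.inl ⟨⟨hWσ, hWτ⟩, fun hcon => not_upper_and_lower hT hm hQ4 hσeq hWσ hcon.1⟩
  · exact absurd rfl hipq
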